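/- arXiv:2201.08797 — 13 statements merged into one kernel-verified Lean document; each statement's English description precedes it below -/
import Mathlib

section
/- Let E be a finite-dimensional real normed vector space and C ⊆ E a convex cone (i.e., closed under multiplication by positive scalars and under addition). Then the closure of C contains no line (equivalently, C is 'strict') if and only if there exists a continuous linear functional u on E such that C ⊆ {x ∈ E : u(x) ≥ ‖x‖}. -/
/-!
A closed convex cone `D` contains a line iff it contains a pair `±x` with `x ≠ 0`: the direction
`v` of a line `p + t • v` in `D` is the limit of `t⁻¹ • (p + t • v)`. If `D` is salient, each
`x ∈ D \ {0}` is separated from `-x ∉ D` by a functional that is nonnegative on `D` and positive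
at `x`. Finitely many of these cover the compact set `D ∩ sphere 0 1`, and their sum `u`
satisfies `1 ≤ u` there, hence `‖x‖ ≤ u x` on `D` by homogeneity. Conversely such a `u` forces
`x = 0` whenever `x, -x ∈ D`.
-/

open Filter Topology Metric

namespace ConvexCone

theorem nonneg_of_lt_apply {E : Type*} [AddCommGroup E] [Module ℝ E] (K : ConvexCone ℝ E)
    {f : E →ₗ[ℝ] ℝ} {a : ℝ} (ha : ∀ y ∈ K, a < f y) :
    ∀ y ∈ K, 0 ≤ f y := by
  intro y hy
  by_contra! hfy
  have := ha _ (K.smul_mem (div_pos_of_neg_of_neg (ha y hy |>.trans hfy) hfy) hy)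
  simp [hfy.ne] at this

section TopologicalVectorSpace

variable {E : Type*} [AddCommGroup E] [TopologicalSpace E] [Module ℝ E] [ContinuousSMul ℝ E]
  (K : ConvexCone ℝ E)

theorem zero_mem_closure {x : E} (hx : x ∈ K) : (0 : E) ∈ closure (K : Set E) := by
  have hlim : Tendsto (fun t : ℝ => t • x) (𝓝[>] 0) (𝓝 0) := by
    simpa using (tendsto_nhdsWithin_of_tendsto_nhds (tendsto_id (x := 𝓝 (0 : ℝ)))).smul_const x
  refine mem_closure_of_tendsto hlim ?_
  filter_upwards [self_mem_nhdsWithin] with t ht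
  exact K.smul_mem ht hx

theorem mem_of_forall_add_smul_mem [ContinuousAdd E] (hK : IsClosed (K : Set E)) {p v : E}
    (h : ∀ t : ℝ, 0 < t → p + t • v ∈ K) : v ∈ K := by
  have hlim : Tendsto (fun t : ℝ => t⁻¹ • p + v) atTop (𝓝 v) := by
    simpa using ((tendsto_inv_atTop_zero (𝕜 := ℝ)).smul_const p).add_const v
  refine hK.mem_of_tendsto hlim ?_
  filter_upwards [eventually_gt_atTop 0] with t ht
  have := K.smul_mem (inv_pos.2 ht) (h t ht)
  rwa [smul_add, smul_smul, inv_mul_cancel₀ ht.ne', one_smul] at this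

theorem exists_line_iff_not_salient [ContinuousAdd E] (hK : IsClosed (K : Set E)) :
    (∃ p v : E, v ≠ 0 ∧ ∀ t : ℝ, p + t • v ∈ K) ↔ ¬ K.Salient := by
  constructor
  · rintro ⟨p, v, hv, hline⟩ hsal
    have hv_mem : v ∈ K := K.mem_of_forall_add_smul_mem hK fun t _ => hline t
    have hnv_mem : -v ∈ K := K.mem_of_forall_add_smul_mem hK fun t _ => by
      simpa [smul_neg] using hline (-t)
    exact hsal v hv_mem hv hnv_mem
  · intro hsal
    simp only [Salient, not_forall, not_not] at hsal
    obtain ⟨x, hx, hx0, hnx⟩ := hsal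
    refine ⟨0, x, hx0, fun t => ?_⟩
    rw [zero_add]
    rcases lt_trichotomy t 0 with ht | rfl | ht
    · simpa using K.smul_mem (neg_pos.2 ht) hnx
    · simpa [hK.closure_eq] using K.zero_mem_closure hx
    · exact K.smul_mem ht hx

theorem exists_nonneg_pos_of_salient [IsTopologicalAddGroup E] [LocallyConvexSpace ℝ E]
    (hK : IsClosed (K : Set E)) (hsal : K.Salient)
    {x : E} (hx : x ∈ K) (hx0 : x ≠ 0) :
    ∃ f : StrongDual ℝ E, (∀ y ∈ K, 0 ≤ f y) ∧ 0 < f x := by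
  obtain ⟨f, a, hfa, hf⟩ := geometric_hahn_banach_point_closed K.convex hK (hsal x hx hx0)
  have ha : a < 0 := by
    simpa using hf 0 (by simpa [hK.closure_eq] using K.zero_mem_closure hx)
  exact ⟨f, K.nonneg_of_lt_apply (f := (f : E →ₗ[ℝ] ℝ)) hf, by linarith [map_neg f x]⟩

end TopologicalVectorSpace

theorem salient_of_norm_le {E : Type*} [NormedAddCommGroup E] [Module ℝ E] (K : ConvexCone ℝ E)
    {u : E →ₗ[ℝ] ℝ} (hu : ∀ x ∈ K, ‖x‖ ≤ u x) : K.Salient := by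
  intro x hx hx0 hnx
  have hpos := hu x hx
  have hneg := hu (-x) hnx
  rw [norm_neg, map_neg] at hneg
  exact hx0 (norm_le_zero_iff.1 (by linarith))

end ConvexCone

theorem IsCompact.exists_one_le_of_forall_nonneg_pos {E : Type*} [AddCommGroup E]
    [TopologicalSpace E] [Module ℝ E] {s : Set E} (hs : IsCompact s)
    (h : ∀ x ∈ s, ∃ f : StrongDual ℝ E, (∀ y ∈ s, 0 ≤ f y) ∧ 0 < f x) :
    ∃ f : StrongDual ℝ E, ∀ x ∈ s, 1 ≤ f x := by
  have h' : ∀ x ∈ s, ∃ f : StrongDual ℝ E, (∀ y ∈ s, 0 ≤ f y) ∧ 1 < f x := by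
    intro x hx
    obtain ⟨f, hf0, hfx⟩ := h x hx
    refine ⟨(2 / f x) • f, fun y hy => ?_, ?_⟩
    · simpa using mul_nonneg (by positivity) (hf0 y hy)
    · simp [hfx.ne']
  choose! f hf0 hf1 using h'
  obtain ⟨t, hts, hcover⟩ := hs.elim_nhds_subcover (fun x => {y | 1 < f x y})
    fun x hx => (isOpen_lt continuous_const (f x).continuous).mem_nhds (hf1 x hx)
  refine ⟨∑ x ∈ t, f x, fun y hy => ?_⟩
  obtain ⟨x, hxt, hyx⟩ := Set.mem_iUnion₂.1 (hcover hy)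
  rw [FunLike.coe_sum, Finset.sum_apply]
  calc 1 ≤ f x y := hyx.le
    _ ≤ ∑ z ∈ t, f z y := Finset.single_le_sum (fun z hz => hf0 z (hts z hz) y hy) hxt

theorem ConvexCone.exists_norm_le_of_salient {E : Type*} [NormedAddCommGroup E]
    [NormedSpace ℝ E] [FiniteDimensional ℝ E] (K : ConvexCone ℝ E) (hK : IsClosed (K : Set E))
    (hsal : K.Salient) : ∃ u : StrongDual ℝ E, ∀ x ∈ K, ‖x‖ ≤ u x := by
  have hpos : ∀ x ∈ (K : Set E) ∩ sphere 0 1,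
      ∃ f : StrongDual ℝ E, (∀ y ∈ (K : Set E) ∩ sphere 0 1, 0 ≤ f y) ∧ 0 < f x := by
    intro x hx
    obtain ⟨f, hf0, hfx⟩ :=
      K.exists_nonneg_pos_of_salient hK hsal hx.1 (ne_zero_of_mem_unit_sphere ⟨x, hx.2⟩)
    exact ⟨f, fun y hy => hf0 y hy.1, hfx⟩
  obtain ⟨u, hu⟩ :=
    ((isCompact_sphere (0 : E) 1).inter_left hK).exists_one_le_of_forall_nonneg_pos hpos
  refine ⟨u, fun x hx => ?_⟩
  rcases eq_or_ne x 0 with rfl | hx0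
  · simp
  have hxn : 0 < ‖x‖ := norm_pos_iff.2 hx0
  have := hu (‖x‖⁻¹ • x) ⟨K.smul_mem (inv_pos.2 hxn) hx, by simp [norm_smul, hxn.ne']⟩
  rwa [map_smul, smul_eq_mul, ← div_eq_inv_mul, one_le_div hxn] at this

theorem stmt0_general {E : Type*} [NormedAddCommGroup E] [NormedSpace ℝ E]
    [FiniteDimensional ℝ E] (C : Set E)
    (hscale : ∀ r : ℝ, 0 < r → ∀ x ∈ C, r • x ∈ C)
    (hadd : ∀ x ∈ C, ∀ y ∈ C, x + y ∈ C) :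
    (¬ ∃ (p v : E), v ≠ 0 ∧ ∀ t : ℝ, p + t • v ∈ closure C) ↔
      ∃ u : E →L[ℝ] ℝ, ∀ x ∈ C, ‖x‖ ≤ u x := by
  let K : ConvexCone ℝ E := ⟨C, fun r hr x hx => hscale r hr x hx, fun x hx y hy => hadd x hx y hy⟩
  refine (not_congr (K.closure.exists_line_iff_not_salient isClosed_closure)).trans ?_
  rw [not_not]
  constructor
  · intro hsal
    obtain ⟨u, hu⟩ := K.closure.exists_norm_le_of_salient isClosed_closure hsal
    exact ⟨u, fun x hx => hu x (subset_closure hx)⟩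
  · rintro ⟨u, hu⟩
    exact K.closure.salient_of_norm_le (u := (u : E →ₗ[ℝ] ℝ))
      fun x hx => closure_minimal hu (isClosed_le continuous_norm u.continuous) hx

/-- A convex cone `C` in a finite-dimensional real normed vector space has
closure containing no line (i.e. is strict) iff there is a continuous linear functional `u`
with `C ⊆ {x | u x ≥ ‖x‖}`. -/
theorem stmt0 {E : Type*} [NormedAddCommGroup E] [NormedSpace ℝ E]
    [FiniteDimensional ℝ E] (hdim : 0 < Module.finrank ℝ E) (C : Set E)
    (hscale : ∀ r : ℝ, 0 < r → ∀ x ∈ C, r • x ∈ C)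
    (hadd : ∀ x ∈ C, ∀ y ∈ C, x + y ∈ C) :
    (¬ ∃ (p v : E), v ≠ 0 ∧ ∀ t : ℝ, p + t • v ∈ closure C) ↔
      ∃ u : E →L[ℝ] ℝ, ∀ x ∈ C, ‖x‖ ≤ u x :=
  stmt0_general C hscale hadd
end

section
/- Let Z : E → F be a linear map between finite-dimensional real normed vector spaces, V ⊆ F a strict convex cone, and ε > 0. Then the convex cone C(V,Z,ε) generated by {x ∈ E : Z(x) ∈ V and ‖Z(x)‖ ≥ ε‖x‖} is strict, and moreover there exists ε' > 0 such that ‖Z(x)‖ ≥ ε'‖x‖ for all x ∈ C(V,Z,ε). -/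
/-!
The closure of `V` is a closed salient cone. On its (compact) unit sphere finitely many
Hahn–Banach functionals that are nonnegative on the cone already have a strictly positive sum `f`,
so `c ‖y‖ ≤ f y` on `V` for some `c > 0`. The inequality `ε c ‖x‖ ≤ f (Z x)` survives positive
combinations, hence holds on the whole cone generated by `{x | Z x ∈ V ∧ ε ‖x‖ ≤ ‖Z x‖}`, and
gives `ε'`. A line in the closure of that cone is mapped by `Z` either onto a line in
`closure V`, or to a single point, which the bound `‖x‖ ≤ ‖Z x‖ / ε'` rules out.
-/

/-- The conical hull of a set `S`: the smallest convex cone containing `S`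
(the set of finite positive combinations of elements of `S`). -/
def coneHull {E : Type*} [AddCommMonoid E] [SMul ℝ E] (S : Set E) : Set E :=
  ⋂₀ {C : Set E | S ⊆ C ∧ (∀ r : ℝ, 0 < r → ∀ x ∈ C, r • x ∈ C) ∧
      ∀ x ∈ C, ∀ y ∈ C, x + y ∈ C}

open Set

theorem coneHull_subset {E : Type*} [AddCommMonoid E] [SMul ℝ E] {S C : Set E} (hSC : S ⊆ C)
    (hsmul : ∀ r : ℝ, 0 < r → ∀ x ∈ C, r • x ∈ C) (hadd : ∀ x ∈ C, ∀ y ∈ C, x + y ∈ C) :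
    coneHull S ⊆ C :=
  sInter_subset_of_mem ⟨hSC, hsmul, hadd⟩

theorem mul_norm_le_of_mem_coneHull {E : Type*} [NormedAddCommGroup E] [NormedSpace ℝ E]
    {S : Set E} (g : E →ₗ[ℝ] ℝ) {a : ℝ} (ha : 0 ≤ a) (hS : ∀ x ∈ S, a * ‖x‖ ≤ g x) :
    ∀ x ∈ coneHull S, a * ‖x‖ ≤ g x := by
  refine coneHull_subset (C := {x | a * ‖x‖ ≤ g x}) hS
    (fun r hr x (hx : a * ‖x‖ ≤ g x) => ?_)
    (fun x (hx : a * ‖x‖ ≤ g x) y (hy : a * ‖y‖ ≤ g y) => ?_)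
  · change a * ‖r • x‖ ≤ g (r • x)
    rw [map_smul, smul_eq_mul, norm_smul, Real.norm_of_nonneg hr.le]
    nlinarith
  · change a * ‖x + y‖ ≤ g (x + y)
    rw [map_add]
    nlinarith [norm_add_le x y]

def ContainsLine {E : Type*} [AddCommGroup E] [Module ℝ E] (X : Set E) : Prop :=
  ∃ p v : E, v ≠ 0 ∧ ∀ t : ℝ, p + t • v ∈ X

theorem ConvexCone.salient_of_not_containsLine {E : Type*} [AddCommGroup E] [Module ℝ E]
    (K : ConvexCone ℝ E) (hK : ¬ ContainsLine (K : Set E)) : K.Salient := by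
  intro x hx hx0 hnx
  refine hK ⟨0, x, hx0, fun t => ?_⟩
  rw [zero_add]
  rcases lt_trichotomy t 0 with ht | rfl | ht
  · simpa using K.smul_mem (neg_pos.2 ht) hnx
  · simpa using K.add_mem hx hnx
  · exact K.smul_mem ht hx

section Normed

variable {E F : Type*} [NormedAddCommGroup E] [NormedSpace ℝ E]
  [NormedAddCommGroup F] [NormedSpace ℝ F]

theorem exists_lt_norm_add_smul (p : E) {v : E} (hv : v ≠ 0) (M : ℝ) :
    ∃ t : ℝ, M < ‖p + t • v‖ := by
  have hvn : 0 < ‖v‖ := norm_pos_iff.2 hv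
  set t := (|M| + ‖p‖ + 1) / ‖v‖
  have ht : ‖t • v‖ = |M| + ‖p‖ + 1 := by
    rw [norm_smul, Real.norm_of_nonneg (by positivity), div_mul_cancel₀ _ hvn.ne']
  have h := norm_sub_norm_le (t • v) (-p)
  rw [norm_neg, sub_neg_eq_add, add_comm] at h
  exact ⟨t, by linarith [le_abs_self M]⟩

theorem not_containsLine_of_subset (Z : E →ₗ[ℝ] F) {K : Set F} (hK : ¬ ContainsLine K)
    {a : ℝ} (ha : 0 < a) {A : Set E} (hA : A ⊆ {x | Z x ∈ K ∧ a * ‖x‖ ≤ ‖Z x‖}) :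
    ¬ ContainsLine A := by
  rintro ⟨p, v, hv, hline⟩
  by_cases hZv : Z v = 0
  · obtain ⟨t, ht⟩ := exists_lt_norm_add_smul p hv (‖Z p‖ / a)
    have h := (hA (hline t)).2
    rw [map_add, map_smul, hZv, smul_zero, add_zero, ← le_div_iff₀' ha] at h
    linarith
  · exact hK ⟨Z p, Z v, hZv, fun t => by simpa using (hA (hline t)).1⟩

theorem ConvexCone.pointed_closure {K : ConvexCone ℝ E} (hK : (K : Set E).Nonempty) :
    K.closure.Pointed := by
  obtain ⟨x, hx⟩ := hK
  show (0 : E) ∈ closure (K : Set E)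
  simpa using map_mem_closure (continuous_id.smul continuous_const)
    (by simp : (0 : ℝ) ∈ closure (Ioi 0)) (fun r hr => K.smul_mem hr hx)

end Normed

namespace ProperCone

variable {E : Type*} [TopologicalSpace E] [AddCommGroup E] [IsTopologicalAddGroup E]
  [Module ℝ E] [ContinuousSMul ℝ E] [LocallyConvexSpace ℝ E]

theorem exists_dual_pos_of_neg_notMem (C : ProperCone ℝ E) {b : E} (hb : -b ∉ C) :
    ∃ f : StrongDual ℝ E, (∀ x ∈ C, 0 ≤ f x) ∧ 0 < f b := by
  obtain ⟨f, hfC, hfb⟩ := C.hyperplane_separation_point hb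
  exact ⟨f, hfC, by simpa using hfb⟩

theorem exists_dual_pos_on_isCompact (C : ProperCone ℝ E) {s : Set E} (hs : IsCompact s)
    (hsC : s ⊆ C) (hs_neg : ∀ x ∈ s, -x ∉ C) :
    ∃ f : StrongDual ℝ E, ∀ x ∈ s, 0 < f x := by
  have hcover : s ⊆ ⋃ f ∈ {f : StrongDual ℝ E | ∀ x ∈ C, 0 ≤ f x}, {x | 0 < f x} := by
    intro x hx
    obtain ⟨f, hfC, hfx⟩ := C.exists_dual_pos_of_neg_notMem (hs_neg x hx)
    exact mem_biUnion hfC hfx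
  obtain ⟨t, htC, ht, hst⟩ := hs.elim_finite_subcover_image
    (fun f _ => isOpen_lt continuous_const f.continuous) hcover
  refine ⟨∑ f ∈ ht.toFinset, f, fun x hx => ?_⟩
  obtain ⟨f, hft, hfx⟩ := mem_iUnion₂.1 (hst hx)
  rw [sum_apply]
  exact Finset.sum_pos' (fun g hg => htC (ht.mem_toFinset.1 hg) x (hsC hx))
    ⟨f, ht.mem_toFinset.2 hft, hfx⟩

end ProperCone

section FiniteDimensional

variable {E : Type*} [NormedAddCommGroup E] [NormedSpace ℝ E] [FiniteDimensional ℝ E]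

theorem ProperCone.exists_mul_norm_le_of_salient (C : ProperCone ℝ E)
    (hC : ((C : PointedCone ℝ E) : ConvexCone ℝ E).Salient) :
    ∃ f : StrongDual ℝ E, ∃ c > 0, ∀ x ∈ C, c * ‖x‖ ≤ f x := by
  set s := (C : Set E) ∩ Metric.sphere 0 1
  have hs : IsCompact s := (isCompact_sphere 0 1).inter_left C.isClosed
  obtain ⟨f, hf⟩ := C.exists_dual_pos_on_isCompact hs inter_subset_left
    (fun x hx => hC x hx.1 (Metric.ne_of_mem_sphere hx.2 one_ne_zero))
  obtain ⟨c, hc, hcf⟩ := hs.exists_forall_le' f.continuous.continuousOn hf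
  refine ⟨f, c, hc, fun x hx => ?_⟩
  rcases eq_or_ne x 0 with rfl | hx0
  · simp
  have hxn : 0 < ‖x‖ := norm_pos_iff.2 hx0
  have h := hcf (‖x‖⁻¹ • x) ⟨C.smul_mem hx (by positivity), by simp [norm_smul, hxn.ne']⟩
  rw [map_smul, smul_eq_mul, le_inv_mul_iff₀ hxn] at h
  linarith

theorem ConvexCone.exists_mul_norm_le (K : ConvexCone ℝ E) (hK : K.closure.Salient) :
    ∃ f : StrongDual ℝ E, ∃ c > 0, ∀ x ∈ K, c * ‖x‖ ≤ f x := by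
  rcases (K : Set E).eq_empty_or_nonempty with hK0 | hKne
  · exact ⟨0, 1, one_pos, fun x hx => (hK0.subset hx).elim⟩
  let C : ProperCone ℝ E := ⟨K.closure.toPointedCone (pointed_closure hKne), isClosed_closure⟩
  obtain ⟨f, c, hc, hf⟩ := C.exists_mul_norm_le_of_salient hK
  exact ⟨f, c, hc, fun x hx => hf x (subset_closure hx)⟩

end FiniteDimensional

/-- For a linear map `Z : E → F`, a strict convex cone `V ⊆ F` and `ε > 0`,
the convex cone generated by `{x | Z x ∈ V, ‖Z x‖ ≥ ε ‖x‖}` is strict, and there is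
`ε' > 0` with `‖Z x‖ ≥ ε' ‖x‖` on it. -/
theorem stmt1 {E F : Type*} [NormedAddCommGroup E] [NormedSpace ℝ E] [FiniteDimensional ℝ E]
    [NormedAddCommGroup F] [NormedSpace ℝ F] [FiniteDimensional ℝ F]
    (Z : E →ₗ[ℝ] F) (V : Set F)
    (hVscale : ∀ r : ℝ, 0 < r → ∀ x ∈ V, r • x ∈ V)
    (hVadd : ∀ x ∈ V, ∀ y ∈ V, x + y ∈ V)
    (hVstrict : ¬ ∃ (p v : F), v ≠ 0 ∧ ∀ t : ℝ, p + t • v ∈ closure V)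
    (ε : ℝ) (hε : 0 < ε) :
    (¬ ∃ (p v : E), v ≠ 0 ∧ ∀ t : ℝ,
        p + t • v ∈ closure (coneHull {x : E | Z x ∈ V ∧ ε * ‖x‖ ≤ ‖Z x‖})) ∧
    ∃ ε' : ℝ, 0 < ε' ∧
      ∀ x ∈ coneHull {x : E | Z x ∈ V ∧ ε * ‖x‖ ≤ ‖Z x‖}, ε' * ‖x‖ ≤ ‖Z x‖ := by
  set S := {x : E | Z x ∈ V ∧ ε * ‖x‖ ≤ ‖Z x‖}
  let Vc : ConvexCone ℝ F := ⟨V, hVscale, hVadd⟩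
  obtain ⟨f, c, hc, hfV⟩ := Vc.exists_mul_norm_le (Vc.closure.salient_of_not_containsLine hVstrict)
  have hSV : coneHull S ⊆ Z ⁻¹' V := coneHull_subset (fun x hx => hx.1)
    (fun r hr x hx => (Vc.comap Z).smul_mem hr hx) (fun x hx y hy => (Vc.comap Z).add_mem hx hy)
  have hSf : ∀ x ∈ coneHull S, ε * c * ‖x‖ ≤ f (Z x) :=
    mul_norm_le_of_mem_coneHull (f.toLinearMap ∘ₗ Z) (by positivity) fun x ⟨hxV, hx⟩ =>
      calc ε * c * ‖x‖ = c * (ε * ‖x‖) := by ring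
        _ ≤ c * ‖Z x‖ := by gcongr
        _ ≤ f (Z x) := hfV _ hxV
  set ε' := ε * c / (‖f‖ + 1)
  have hε' : 0 < ε' := by positivity
  have hbound : ∀ x ∈ coneHull S, ε' * ‖x‖ ≤ ‖Z x‖ := fun x hx => by
    rw [div_mul_eq_mul_div, div_le_iff₀ (by positivity)]
    calc ε * c * ‖x‖ ≤ f (Z x) := hSf x hx
      _ ≤ ‖f‖ * ‖Z x‖ := (Real.le_norm_self _).trans (f.le_opNorm _)
      _ ≤ ‖Z x‖ * (‖f‖ + 1) := by nlinarith [norm_nonneg (Z x)]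
  have hclosed : IsClosed {x | Z x ∈ closure V ∧ ε' * ‖x‖ ≤ ‖Z x‖} := by
    have hZ : Continuous Z := Z.continuous_of_finiteDimensional
    exact (isClosed_closure.preimage hZ).inter
      (isClosed_le (continuous_const.mul continuous_norm) hZ.norm)
  refine ⟨not_containsLine_of_subset Z hVstrict hε' ?_, ε', hε', hbound⟩
  exact closure_minimal (fun x hx => ⟨subset_closure (hSV hx), hbound x hx⟩) hclosed
end

section
/- Let C ⊆ E be a strict convex cone in a finite-dimensional real normed vector space. Then there exists a constant c > 0 such that for any finite collection x₁,…,x_k ∈ C, one has ∑ᵢ ‖xᵢ‖ ≤ c · ‖∑ᵢ xᵢ‖. -/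
/-!
Let `D` be the closure of `C`: a closed pointed cone which, by strictness, is salient. For every
unit vector `x ∈ D` the point `-x` lies outside `D`, so Farkas' lemma gives a functional that is
nonnegative on `D` and positive at `x`. Compactness of the unit sphere of `D` lets finitely many of
these functionals cover it, and their sum `f` satisfies `u ‖x‖ ≤ f x` on `D` for some `u > 0`.
Summing over the family, `u ∑ ‖xᵢ‖ ≤ f (∑ xᵢ) ≤ ‖f‖ ‖∑ xᵢ‖`.
-/

open Metric

lemma PointedCone.smul_mem_of_neg_mem {𝕜 E : Type*} [Ring 𝕜] [LinearOrder 𝕜] [IsOrderedRing 𝕜]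
    [AddCommGroup E] [Module 𝕜 E] {C : PointedCone 𝕜 E} {x : E} (hx : x ∈ C) (hnx : -x ∈ C)
    (t : 𝕜) : t • x ∈ C := by
  rcases le_or_gt 0 t with ht | ht
  · exact C.smul_mem ht hx
  · simpa using C.smul_mem (neg_nonneg.2 ht.le) hnx

namespace ProperCone

lemma exists_dual_pos_on_of_salient {E : Type*} [TopologicalSpace E] [AddCommGroup E]
    [IsTopologicalAddGroup E] [Module ℝ E] [ContinuousSMul ℝ E] [LocallyConvexSpace ℝ E]
    (C : ProperCone ℝ E) (hC : (C : ConvexCone ℝ E).Salient) {K : Set E} (hK : IsCompact K)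
    (hKC : K ⊆ C) (hK0 : (0 : E) ∉ K) : ∃ f : StrongDual ℝ E, ∀ x ∈ K, 0 < f x := by
  have hcover : K ⊆ ⋃ f : {f : StrongDual ℝ E // ∀ x ∈ C, 0 ≤ f x}, {x | 0 < f.1 x} := by
    intro x hx
    obtain ⟨f, hfC, hfx⟩ :=
      C.hyperplane_separation_point (hC x (hKC hx) (ne_of_mem_of_not_mem hx hK0))
    exact Set.mem_iUnion.2 ⟨⟨f, hfC⟩, by simpa using hfx⟩
  obtain ⟨t, ht⟩ :=
    hK.elim_finite_subcover _ (fun f ↦ isOpen_lt continuous_const f.1.continuous) hcover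
  refine ⟨∑ f ∈ t, f.1, fun x hx ↦ ?_⟩
  obtain ⟨f, hft, hfx⟩ := Set.mem_iUnion₂.1 (ht hx)
  rw [sum_apply]
  exact Finset.sum_pos' (fun g _ ↦ g.2 x (hKC hx)) ⟨f, hft, hfx⟩

lemma exists_mul_norm_le_dual_of_salient {E : Type*} [NormedAddCommGroup E] [NormedSpace ℝ E]
    [ProperSpace E] (C : ProperCone ℝ E) (hC : (C : ConvexCone ℝ E).Salient) :
    ∃ f : StrongDual ℝ E, ∃ u : ℝ, 0 < u ∧ ∀ x ∈ C, u * ‖x‖ ≤ f x := by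
  set K := (C : Set E) ∩ sphere 0 1
  have hK : IsCompact K := (isCompact_sphere 0 1).inter_left C.isClosed
  obtain ⟨f, hf⟩ := C.exists_dual_pos_on_of_salient hC hK Set.inter_subset_left (by simp [K])
  obtain ⟨u, hu, huf⟩ := hK.exists_forall_le' f.continuous.continuousOn hf
  refine ⟨f, u, hu, fun x hx ↦ ?_⟩
  rcases eq_or_ne x 0 with rfl | hx0
  · simp
  have hnorm : 0 < ‖x‖ := norm_pos_iff.2 hx0
  have hxK : ‖x‖⁻¹ • x ∈ K := ⟨C.smul_mem hx (by positivity), by simp [norm_smul, hx0]⟩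
  have := huf _ hxK
  rw [map_smul, smul_eq_mul, le_inv_mul_iff₀ hnorm] at this
  linarith

end ProperCone

lemma Finset.sum_norm_le_of_mul_norm_le_dual {ι E : Type*} [NormedAddCommGroup E]
    [NormedSpace ℝ E] (s : Finset ι) {x : ι → E} {f : StrongDual ℝ E} {u : ℝ} (hu : 0 < u)
    (hf : ∀ i ∈ s, u * ‖x i‖ ≤ f (x i)) : ∑ i ∈ s, ‖x i‖ ≤ ‖f‖ / u * ‖∑ i ∈ s, x i‖ := by
  rw [div_mul_eq_mul_div, le_div_iff₀ hu]
  calc (∑ i ∈ s, ‖x i‖) * u = ∑ i ∈ s, u * ‖x i‖ := by rw [Finset.sum_mul]; simp only [mul_comm]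
    _ ≤ f (∑ i ∈ s, x i) := by rw [map_sum]; exact Finset.sum_le_sum hf
    _ ≤ ‖f‖ * ‖∑ i ∈ s, x i‖ := (le_abs_self _).trans (f.le_opNorm _)

/-- For a strict convex cone `C` in a finite-dimensional real normed space
there is `c > 0` with `∑ ‖xᵢ‖ ≤ c ‖∑ xᵢ‖` for all finite families in `C`. -/
theorem stmt2 {E : Type*} [NormedAddCommGroup E] [NormedSpace ℝ E] [FiniteDimensional ℝ E]
    (C : Set E)
    (hscale : ∀ r : ℝ, 0 < r → ∀ x ∈ C, r • x ∈ C)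
    (hadd : ∀ x ∈ C, ∀ y ∈ C, x + y ∈ C)
    (hstrict : ¬ ∃ (p v : E), v ≠ 0 ∧ ∀ t : ℝ, p + t • v ∈ closure C) :
    ∃ c : ℝ, 0 < c ∧ ∀ (k : ℕ) (x : Fin k → E), (∀ i, x i ∈ C) →
      ∑ i, ‖x i‖ ≤ c * ‖∑ i, x i‖ := by
  rcases C.eq_empty_or_nonempty with rfl | hne
  · exact ⟨1, one_pos, fun k x hx ↦ by simp [(⟨fun i ↦ hx i⟩ : IsEmpty (Fin k))]⟩
  let cone : ConvexCone ℝ E := ⟨C, fun r hr x hx ↦ hscale r hr x hx, fun x hx y hy ↦ hadd x hx y hy⟩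
  lift cone.closure to ProperCone ℝ E using ⟨hne.closure, isClosed_closure⟩ with D hD
  have hDC : (D : Set E) = closure C := congrArg SetLike.coe hD
  have hsalient : (D : ConvexCone ℝ E).Salient := fun x hx hx0 hnx ↦
    hstrict ⟨0, x, hx0, fun t ↦ by
      simpa [← hDC] using PointedCone.smul_mem_of_neg_mem (C := D.toPointedCone) hx hnx t⟩
  obtain ⟨f, u, hu, hf⟩ := D.exists_mul_norm_le_dual_of_salient hsalient
  refine ⟨(‖f‖ + 1) / u, by positivity, fun k x hx ↦ ?_⟩
  calc ∑ i, ‖x i‖ ≤ ‖f‖ / u * ‖∑ i, x i‖ :=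
        Finset.univ.sum_norm_le_of_mul_norm_le_dual hu
          fun i _ ↦ hf _ (by rw [← SetLike.mem_coe, hDC]; exact subset_closure (hx i))
    _ ≤ (‖f‖ + 1) / u * ‖∑ i, x i‖ := by gcongr; linarith
end

section
/- Let Γ be a free abelian group of finite rank with a norm on Γ⊗ℝ, and let S ⊆ Γ be a strict semigroup not containing 0 (i.e., S generates a strict convex cone in Γ⊗ℝ). Then: (1) there exists an additive map u : S → ℝ, proper in the sense that preimages of bounded sets are finite, with u(S) ⊆ ℝ_{>0}; (2) for any a ∈ S, the set {b ∈ S : a − b ∈ S ∪ {0}} is finite; (3) for any a ∈ S and any k ≥ 1, the set of tuples (a₁,…,a_k) ∈ S^k with ∑ aᵢ = a is finite. -/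
/-- The canonical embedding `Γ = ℤⁿ → Γ_ℝ = ℝⁿ`. -/
def iotaR (n : ℕ) (a : Fin n → ℤ) : Fin n → ℝ := fun i => (a i : ℝ)

lemma coneHull_eq_hull {E : Type*} [AddCommMonoid E] [SMul ℝ E] (s : Set E) :
    coneHull s = ConvexCone.hull ℝ s := by
  refine subset_antisymm (Set.sInter_subset_of_mem ?_) ?_
  · exact ⟨ConvexCone.subset_hull, fun r hr x hx => (ConvexCone.hull ℝ s).smul_mem hr hx,
      fun x hx y hy => (ConvexCone.hull ℝ s).add_mem hx hy⟩
  · rintro x hx C ⟨hsC, hsmul, hadd⟩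
    exact ConvexCone.hull_min (C := ⟨C, hsmul, hadd⟩) hsC hx

lemma ConvexCone.pointed_closure_of_nonempty {E : Type*} [TopologicalSpace E] [AddCommMonoid E]
    [ContinuousAdd E] [Module ℝ E] [ContinuousSMul ℝ E] (C : ConvexCone ℝ E)
    (hC : (C : Set E).Nonempty) : C.closure.Pointed := by
  obtain ⟨x, hx⟩ := hC
  have hlim : Filter.Tendsto (fun r : ℝ => r • x) (nhdsWithin 0 (Set.Ioi 0)) (nhds 0) := by
    simpa using ((Filter.tendsto_id (x := nhds (0 : ℝ))).mono_left nhdsWithin_le_nhds).smul_const x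
  exact mem_closure_of_tendsto hlim (eventually_mem_nhdsWithin.mono fun r hr => C.smul_mem hr hx)

namespace ProperCone

lemma exists_dual_pos_on_isCompact_s4 {E : Type*} [TopologicalSpace E] [AddCommGroup E]
    [IsTopologicalAddGroup E] [Module ℝ E] [ContinuousSMul ℝ E] [LocallyConvexSpace ℝ E]
    (K : ProperCone ℝ E) (hK : ∀ x ∈ K, -x ∈ K → x = 0)
    {T : Set E} (hT : IsCompact T) (hTK : T ⊆ K) (hT0 : (0 : E) ∉ T) :
    ∃ f : StrongDual ℝ E, (∀ x ∈ K, 0 ≤ f x) ∧ ∀ x ∈ T, 0 < f x := by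
  have hsep : ∀ x : T, ∃ f : StrongDual ℝ E, (∀ y ∈ K, 0 ≤ f y) ∧ 0 < f x := by
    intro ⟨x, hx⟩
    have hneg : -x ∉ K := fun h => hT0 (hK x (hTK hx) h ▸ hx)
    obtain ⟨f, hfK, hfx⟩ := K.hyperplane_separation_point hneg
    exact ⟨f, hfK, by simpa using hfx⟩
  choose g hgK hgx using hsep
  obtain ⟨t, hTt⟩ := hT.elim_finite_subcover (fun x => {y | 0 < g x y})
    (fun x => isOpen_lt continuous_const (g x).continuous)
    fun x hx => Set.mem_iUnion.2 ⟨⟨x, hx⟩, hgx _⟩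
  refine ⟨∑ x ∈ t, g x, fun y hy => ?_, fun y hy => ?_⟩
  · simpa using Finset.sum_nonneg fun x _ => hgK x y hy
  · obtain ⟨x, hxt, hxy⟩ := Set.mem_iUnion₂.1 (hTt hy)
    simpa using Finset.sum_pos' (fun x _ => hgK x y (hTK hy)) ⟨x, hxt, hxy⟩

theorem exists_dual_mul_norm_le {E : Type*} [NormedAddCommGroup E] [NormedSpace ℝ E]
    [FiniteDimensional ℝ E] (K : ProperCone ℝ E) (hK : ∀ x ∈ K, -x ∈ K → x = 0) :
    ∃ f : StrongDual ℝ E, ∃ c : ℝ, 0 < c ∧ ∀ x ∈ K, c * ‖x‖ ≤ f x := by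
  set T := Metric.sphere (0 : E) 1 ∩ K
  have hT : IsCompact T := (isCompact_sphere 0 1).inter_right K.isClosed
  have hT0 : (0 : E) ∉ T := fun h => by simpa using h.1
  obtain ⟨f, -, hfT⟩ := K.exists_dual_pos_on_isCompact_s4 hK hT Set.inter_subset_right hT0
  obtain ⟨c, hc, hcT⟩ := hT.exists_forall_le' f.continuous.continuousOn hfT
  refine ⟨f, c, hc, fun x hx => ?_⟩
  rcases eq_or_ne x 0 with rfl | hx0
  · simp
  have hxpos : 0 < ‖x‖ := norm_pos_iff.2 hx0
  have hxT : ‖x‖⁻¹ • x ∈ T :=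
    ⟨by simp [norm_smul, hxpos.ne'], K.smul_mem hx (inv_nonneg.2 hxpos.le)⟩
  have := hcT _ hxT
  rw [map_smul, smul_eq_mul, le_inv_mul_iff₀ hxpos] at this
  linarith

end ProperCone

lemma norm_iotaR (n : ℕ) (a : Fin n → ℤ) : ‖iotaR n a‖ = ‖a‖ := rfl

lemma finite_sep_abs_le_of_mul_norm_le {Γ : Type*} [NormedAddCommGroup Γ] [ProperSpace Γ]
    [DiscreteTopology Γ] {S : Set Γ} (u : Γ → ℝ) {c : ℝ} (hc : 0 < c)
    (hu : ∀ a ∈ S, c * ‖a‖ ≤ u a) (N : ℝ) : {a ∈ S | |u a| ≤ N}.Finite := by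
  refine (isCompact_closedBall (0 : Γ) (N / c)).finite_of_discrete.subset fun a ⟨ha, haN⟩ => ?_
  rw [mem_closedBall_zero_iff, le_div_iff₀ hc, mul_comm]
  linarith [hu a ha, le_abs_self (u a)]

lemma exists_addMonoidHom_pos_finite_sublevel {n : ℕ} {S : Set (Fin n → ℤ)}
    (h0 : (0 : Fin n → ℤ) ∉ S)
    (hstrict : ¬ ∃ (p v : Fin n → ℝ), v ≠ 0 ∧ ∀ t : ℝ,
        p + t • v ∈ closure (coneHull (iotaR n '' S))) :
    ∃ u : (Fin n → ℤ) →+ ℝ, (∀ a ∈ S, 0 < u a) ∧ ∀ N : ℝ, {a ∈ S | |u a| ≤ N}.Finite := by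
  rcases S.eq_empty_or_nonempty with rfl | hS
  · exact ⟨0, by simp, by simp⟩
  set C := (ConvexCone.hull ℝ (iotaR n '' S)).closure
  have hC : closure (coneHull (iotaR n '' S)) = C := by rw [coneHull_eq_hull]; rfl
  let K : ProperCone ℝ (Fin n → ℝ) :=
    { toSubmodule := C.toPointedCone <| ConvexCone.pointed_closure_of_nonempty _ <|
        (hS.image _).mono ConvexCone.subset_hull
      isClosed' := isClosed_closure }
  have hK : ∀ x ∈ K, -x ∈ K → x = 0 := by
    intro x hx hnx
    by_contra hx0
    refine hstrict ⟨0, x, hx0, fun t => ?_⟩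
    rw [zero_add, hC]
    rcases le_or_gt 0 t with ht | ht
    · exact K.smul_mem hx ht
    · exact neg_smul_neg t x ▸ K.smul_mem hnx (neg_nonneg.2 ht.le)
  have hSK : ∀ a ∈ S, iotaR n a ∈ K :=
    fun a ha => subset_closure (ConvexCone.subset_hull ⟨a, ha, rfl⟩)
  obtain ⟨f, c, hc, hf⟩ := K.exists_dual_mul_norm_le hK
  let u : (Fin n → ℤ) →+ ℝ := (f : (Fin n → ℝ) →+ ℝ).comp ((Int.castAddHom ℝ).compLeft (Fin n))
  have hu : ∀ a ∈ S, c * ‖a‖ ≤ u a := fun a ha => norm_iotaR n a ▸ hf _ (hSK a ha)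
  refine ⟨u, fun a ha => (mul_pos hc (norm_pos_iff.2 ?_)).trans_le (hu a ha),
    finite_sep_abs_le_of_mul_norm_le u hc hu⟩
  rintro rfl
  exact h0 ha

section PositiveProperMap

variable {Γ : Type*} [AddCommGroup Γ] {S : Set Γ} {u : Γ →+ ℝ}
  (hpos : ∀ a ∈ S, 0 < u a) (hfin : ∀ N : ℝ, {a ∈ S | |u a| ≤ N}.Finite)
include hpos hfin

lemma finite_sep_sub_mem_union_zero (a : Γ) : {b ∈ S | a - b ∈ S ∪ {0}}.Finite := by
  refine (hfin |u a|).subset fun b ⟨hb, hab⟩ => ⟨hb, abs_le_abs_of_nonneg (hpos b hb).le ?_⟩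
  have : 0 ≤ u (a - b) := by
    rcases hab with hab | hab
    · exact (hpos _ hab).le
    · simp [Set.mem_singleton_iff.1 hab]
  rw [map_sub] at this
  linarith

lemma finite_setOf_sum_eq (a : Γ) (k : ℕ) :
    {x : Fin k → Γ | (∀ i, x i ∈ S) ∧ ∑ i, x i = a}.Finite := by
  refine (Set.Finite.pi fun _ : Fin k => hfin |u a|).subset fun x ⟨hxS, hxa⟩ => ?_
  rw [Set.mem_univ_pi]
  intro i
  refine ⟨hxS i, abs_le_abs_of_nonneg (hpos _ (hxS i)).le ?_⟩
  calc u (x i) ≤ ∑ j, u (x j) :=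
        Finset.single_le_sum (fun j _ => (hpos _ (hxS j)).le) (Finset.mem_univ i)
    _ = u a := by rw [← hxa, map_sum]

end PositiveProperMap

theorem stmt4_general (n : ℕ) (S : Set (Fin n → ℤ))
    (h0 : (0 : Fin n → ℤ) ∉ S)
    (hstrict : ¬ ∃ (p v : Fin n → ℝ), v ≠ 0 ∧ ∀ t : ℝ,
        p + t • v ∈ closure (coneHull (iotaR n '' S))) :
    (∃ u : (Fin n → ℤ) →+ ℝ, (∀ a ∈ S, 0 < u a) ∧
        ∀ N : ℝ, {a ∈ S | |u a| ≤ N}.Finite) ∧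
    (∀ a ∈ S, {b ∈ S | a - b ∈ S ∪ {0}}.Finite) ∧
    (∀ a ∈ S, ∀ k : ℕ, 1 ≤ k →
        {x : Fin k → (Fin n → ℤ) | (∀ i, x i ∈ S) ∧ ∑ i, x i = a}.Finite) := by
  obtain ⟨u, hpos, hfin⟩ := exists_addMonoidHom_pos_finite_sublevel h0 hstrict
  exact ⟨⟨u, hpos, hfin⟩, fun a _ => finite_sep_sub_mem_union_zero hpos hfin a,
    fun a _ k _ => finite_setOf_sum_eq hpos hfin a k⟩

/-- For a strict semigroup `S ⊆ Γ = ℤⁿ` without zero (it generates a strict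
convex cone in `Γ_ℝ = ℝⁿ`):
(1) there is an additive proper map `u : Γ → ℝ` positive on `S`;
(2) lower sets `{b ∈ S : b ≤ a}` are finite;
(3) the set of decompositions of `a ∈ S` as a sum of `k` elements of `S` is finite. -/
theorem stmt4 (n : ℕ) (S : Set (Fin n → ℤ))
    (hsemi : ∀ a ∈ S, ∀ b ∈ S, a + b ∈ S)
    (h0 : (0 : Fin n → ℤ) ∉ S)
    (hstrict : ¬ ∃ (p v : Fin n → ℝ), v ≠ 0 ∧ ∀ t : ℝ,
        p + t • v ∈ closure (coneHull (iotaR n '' S))) :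
    (∃ u : (Fin n → ℤ) →+ ℝ, (∀ a ∈ S, 0 < u a) ∧
        ∀ N : ℝ, {a ∈ S | |u a| ≤ N}.Finite) ∧
    (∀ a ∈ S, {b ∈ S | a - b ∈ S ∪ {0}}.Finite) ∧
    (∀ a ∈ S, ∀ k : ℕ, 1 ≤ k →
        {x : Fin k → (Fin n → ℤ) | (∀ i, x i ∈ S) ∧ ∑ i, x i = a}.Finite) :=
  stmt4_general n S h0 hstrict
end

section
/- Let Z : E → F be a linear map between finite-dimensional real vector spaces, Q : E → ℝ a quadratic form that is negative semi-definite on Ker Z, and ℓ ⊆ F a ray (a one-dimensional blunt cone). Then the cone C(ℓ,Z,Q) = {x ∈ E : Z(x) ∈ ℓ, Q(x) ≥ 0} is convex, and moreover Q(x + y) ≥ Q(x) + Q(y) for all x, y ∈ C(ℓ,Z,Q). -/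
/-- For a linear map `Z : E → F`, a quadratic form `Q` negative semi-definite
on `Ker Z`, and a ray `ℓ = ℝ_{>0} v ⊆ F`, the cone
`C(ℓ,Z,Q) = {x | Z x ∈ ℓ, Q x ≥ 0}` is convex and `Q` is superadditive on it. -/
theorem stmt5 {E F : Type*} [AddCommGroup E] [Module ℝ E] [FiniteDimensional ℝ E]
    [AddCommGroup F] [Module ℝ F] [FiniteDimensional ℝ F]
    (Z : E →ₗ[ℝ] F) (Q : QuadraticForm ℝ E)
    (hQ : ∀ x : E, Z x = 0 → Q x ≤ 0)
    (v : F) (hv : v ≠ 0) :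
    Convex ℝ {x : E | (∃ r : ℝ, 0 < r ∧ Z x = r • v) ∧ 0 ≤ Q x} ∧
    ∀ x ∈ {x : E | (∃ r : ℝ, 0 < r ∧ Z x = r • v) ∧ 0 ≤ Q x},
      ∀ y ∈ {x : E | (∃ r : ℝ, 0 < r ∧ Z x = r • v) ∧ 0 ≤ Q x},
        Q x + Q y ≤ Q (x + y) := by
  have key : ∀ x y : E, ∀ r s : ℝ, 0 < r → 0 < s → Z x = r • v → Z y = s • v →
      0 ≤ Q x → 0 ≤ Q y → 0 ≤ QuadraticMap.polar Q x y := by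
    intro x y r s hr hs hx hy hQx hQy
    have hz : Z (s • x - r • y) = 0 := by
      rw [map_sub, map_smul, map_smul, hx, hy, smul_smul, smul_smul, mul_comm, sub_self]
    have h1 := hQ _ hz
    have expand : Q (s • x - r • y)
        = s * s * Q x + r * r * Q y - s * r * QuadraticMap.polar Q x y := by
      rw [sub_eq_add_neg, QuadraticMap.map_add Q (s • x) (-(r • y)),
        QuadraticMap.polar_neg_right, QuadraticMap.polar_smul_right,
        QuadraticMap.polar_smul_left, QuadraticMap.map_neg, QuadraticMap.map_smul,
        QuadraticMap.map_smul]
      simp only [smul_eq_mul]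
      ring
    rw [expand] at h1
    nlinarith [mul_pos hr hs, mul_nonneg hs.le hQx, mul_nonneg hr.le hQy,
      mul_nonneg (mul_nonneg hs.le hs.le) hQx, mul_nonneg (mul_nonneg hr.le hr.le) hQy]
  refine ⟨?_, ?_⟩
  · rintro x ⟨⟨r, hr, hx⟩, hQx⟩ y ⟨⟨s, hs, hy⟩, hQy⟩ a b ha hb hab
    have hp := key x y r s hr hs hx hy hQx hQy
    refine ⟨⟨a * r + b * s, ?_, ?_⟩, ?_⟩
    · rcases eq_or_lt_of_le ha with h | h
      · have hb1 : b = 1 := by linarith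
        have : 0 < b * s := by rw [hb1]; simpa using hs
        nlinarith
      · have h1 : 0 < a * r := mul_pos h hr
        have h2 : 0 ≤ b * s := mul_nonneg hb hs.le
        linarith
    · rw [map_add, map_smul, map_smul, hx, hy, smul_smul, smul_smul, add_smul]
    · have hexp : Q (a • x + b • y)
          = a * a * Q x + b * b * Q y + a * b * QuadraticMap.polar Q x y := by
        rw [QuadraticMap.map_add Q (a • x) (b • y), QuadraticMap.polar_smul_right,
          QuadraticMap.polar_smul_left, QuadraticMap.map_smul, QuadraticMap.map_smul]
        simp only [smul_eq_mul]
        ring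
      rw [hexp]
      have h3 := mul_nonneg (mul_nonneg ha hb) hp
      nlinarith [mul_nonneg (mul_nonneg ha ha) hQx, mul_nonneg (mul_nonneg hb hb) hQy]
  · rintro x ⟨⟨r, hr, hx⟩, hQx⟩ y ⟨⟨s, hs, hy⟩, hQy⟩
    have hp := key x y r s hr hs hx hy hQx hQy
    have := QuadraticMap.map_add Q x y
    linarith
end

section
/- Let Z : E → F be a linear map between finite-dimensional real vector spaces, Q a quadratic form on E negative semi-definite on Ker Z, and ℓ ⊆ F a ray. Then the cone C⁺(ℓ,Z,Q) = {x ∈ E : Z(x) ∈ ℓ, Q(x) > 0} is convex. -/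
private lemma expandQ {E : Type*} [AddCommGroup E] [Module ℝ E]
    (Q : QuadraticForm ℝ E) (c d : ℝ) (x y : E) :
    Q (c • x + d • y)
      = c * c * Q x + d * d * Q y + c * d * QuadraticMap.polar Q x y := by
  have h : QuadraticMap.polar Q (c • x) (d • y)
      = Q (c • x + d • y) - Q (c • x) - Q (d • y) := rfl
  have h2 : QuadraticMap.polar Q (c • x) (d • y)
      = c * (d * QuadraticMap.polar Q x y) := by
    rw [QuadraticMap.polar_smul_left, QuadraticMap.polar_smul_right]
    simp [smul_eq_mul]
  have h3 : Q (c • x) = c * c * Q x := by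
    rw [QuadraticMap.map_smul, smul_eq_mul]
  have h4 : Q (d • y) = d * d * Q y := by
    rw [QuadraticMap.map_smul, smul_eq_mul]
  nlinarith [h, h2, h3, h4]

/-- For a linear map `Z : E → F`, a quadratic form `Q` negative semi-definite
on `Ker Z`, and a ray `ℓ = ℝ_{>0} v ⊆ F`, the cone
`C⁺(ℓ,Z,Q) = {x | Z x ∈ ℓ, Q x > 0}` is convex. -/
theorem stmt6 {E F : Type*} [AddCommGroup E] [Module ℝ E] [FiniteDimensional ℝ E]
    [AddCommGroup F] [Module ℝ F] [FiniteDimensional ℝ F]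
    (Z : E →ₗ[ℝ] F) (Q : QuadraticForm ℝ E)
    (hQ : ∀ x : E, Z x = 0 → Q x ≤ 0)
    (v : F) (hv : v ≠ 0) :
    Convex ℝ {x : E | (∃ r : ℝ, 0 < r ∧ Z x = r • v) ∧ 0 < Q x} := by
  rintro x ⟨⟨r, hr, hZx⟩, hQx⟩ y ⟨⟨s, hs, hZy⟩, hQy⟩ a b ha hb hab
  set P := QuadraticMap.polar Q x y with hPdef
  -- the kernel element
  have hker : Z (s • x + (-r) • y) = 0 := by
    simp [map_add, map_smul, hZx, hZy, smul_smul]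
    ring_nf
    simp [mul_comm]
  have hneg : Q (s • x + (-r) • y) ≤ 0 := hQ _ hker
  have hexp := expandQ Q s (-r) x y
  have k1 : (0:ℝ) < r * s := mul_pos hr hs
  have k2 : (0:ℝ) < s * s * Q x := by positivity
  have k3 : (0:ℝ) < r * r * Q y := by positivity
  have hP : 0 < P := by nlinarith [k1, k2, k3, hneg, hexp]
  constructor
  · refine ⟨a * r + b * s, ?_, ?_⟩
    · rcases ha.lt_or_eq with h | h
      · nlinarith [mul_nonneg hb hs.le]
      · have hb1 : b = 1 := by linarith
        rw [← h, hb1]; simpa using hs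
    · simp [map_add, map_smul, hZx, hZy, smul_smul, add_smul]
  · have := expandQ Q a b x y
    rw [this]
    rcases ha.lt_or_eq with h | h
    · nlinarith [mul_pos (mul_pos h h) hQx, mul_nonneg (mul_nonneg hb hb) hQy.le, mul_nonneg (mul_nonneg ha hb) hP.le]
    · have hb1 : b = 1 := by linarith
      rw [← h, hb1]; nlinarith
end

section
/- Let Z : E → F be a linear map between finite-dimensional real vector spaces, Q : E → ℝ a quadratic form that is negative-definite on Ker Z, and V ⊆ F a strict convex cone. Then the convex cone generated by {x ∈ E : Z(x) ∈ V, Q(x) ≥ 0} is strict. -/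
/-!
Compactness of the unit sphere gives `ε > 0` with `ε ‖x‖ ≤ ‖Z x‖` whenever `Q x ≥ 0`. The closure
`W` of `V` is a closed salient cone; separating `-u` from `W` for each unit vector `u ∈ W` and
summing over a finite subcover yields a functional `f` and `c > 0` with `c ‖u‖ ≤ f u` on `W`.
Hence every `x` with `Z x ∈ V` and `Q x ≥ 0`, and with it the closed conical hull of these points,
lies in the closed convex cone `{x | c ε ‖x‖ ≤ f (Z x)}`, which contains no line.
-/

open Set

theorem coneHull_subset_s7 {E : Type*} [AddCommMonoid E] [SMul ℝ E] {S : Set E}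
    (K : ConvexCone ℝ E) (hSK : S ⊆ K) : coneHull S ⊆ K :=
  sInter_subset_of_mem ⟨hSK, fun _ hr _ hx ↦ K.smul_mem hr hx, fun _ hx _ hy ↦ K.add_mem hx hy⟩

theorem QuadraticForm.continuous_of_finiteDimensional {E : Type*} [NormedAddCommGroup E]
    [NormedSpace ℝ E] [FiniteDimensional ℝ E] (Q : QuadraticForm ℝ E) : Continuous Q := by
  have hQ : ⇑Q = fun x ↦ (QuadraticMap.associated Q).toContinuousBilinearMap x x :=
    funext fun x ↦ (QuadraticMap.associated_eq_self_apply ℝ Q x).symm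
  rw [hQ]
  fun_prop

theorem exists_pos_mul_norm_le_of_homogeneous {E : Type*} [NormedAddCommGroup E]
    [NormedSpace ℝ E] [ProperSpace E] {s : Set E} (hs : IsClosed s)
    (hs_smul : ∀ r : ℝ, 0 < r → ∀ x ∈ s, r • x ∈ s) {φ : E → ℝ} (hφ : Continuous φ)
    (hφ_smul : ∀ r : ℝ, 0 < r → ∀ x, φ (r • x) = r * φ x)
    (hφ_pos : ∀ x ∈ s, ‖x‖ = 1 → 0 < φ x) :
    ∃ c : ℝ, 0 < c ∧ ∀ x ∈ s, c * ‖x‖ ≤ φ x := by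
  have hcpt : IsCompact (s ∩ Metric.sphere 0 1) := (isCompact_sphere 0 1).inter_left hs
  obtain ⟨c, hc, hcφ⟩ := hcpt.exists_forall_le' hφ.continuousOn
    fun x hx ↦ hφ_pos x hx.1 (mem_sphere_zero_iff_norm.1 hx.2)
  refine ⟨c, hc, fun x hx ↦ ?_⟩
  rcases eq_or_ne x 0 with rfl | hx0
  · have h := hφ_smul 2 two_pos 0
    rw [smul_zero] at h
    simp only [norm_zero, mul_zero]
    linarith
  · have hn : 0 < ‖x‖ := norm_pos_iff.2 hx0
    have h := hcφ (‖x‖⁻¹ • x) ⟨hs_smul _ (inv_pos.2 hn) x hx, by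
      simp [norm_smul, hn.ne']⟩
    rw [hφ_smul _ (inv_pos.2 hn), le_inv_mul_iff₀ hn] at h
    linarith

theorem ProperCone.exists_nonneg_dual_pos_on_compact {F : Type*} [TopologicalSpace F]
    [AddCommGroup F] [IsTopologicalAddGroup F] [Module ℝ F] [ContinuousSMul ℝ F]
    [LocallyConvexSpace ℝ F] (C : ProperCone ℝ F) {S : Set F} (hS : IsCompact S) (hSC : S ⊆ C)
    (hS_neg : ∀ x ∈ S, -x ∉ C) :
    ∃ f : StrongDual ℝ F, (∀ x ∈ C, 0 ≤ f x) ∧ ∀ x ∈ S, 0 < f x := by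
  have hsep : ∀ x ∈ S, ∃ g : StrongDual ℝ F, (∀ y ∈ C, 0 ≤ g y) ∧ 0 < g x := fun x hx ↦ by
    obtain ⟨g, hgC, hgx⟩ := C.hyperplane_separation_point (hS_neg x hx)
    exact ⟨g, hgC, by simpa using hgx⟩
  choose! g hgC hgx using hsep
  obtain ⟨t, htS, hcover⟩ := hS.elim_nhds_subcover (fun x ↦ {y | 0 < g x y})
    fun x hx ↦ (isOpen_lt continuous_const (g x).continuous).mem_nhds (hgx x hx)
  refine ⟨∑ x ∈ t, g x, fun y hy ↦ ?_, fun y hy ↦ ?_⟩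
  · simpa using Finset.sum_nonneg fun x hx ↦ hgC x (htS x hx) y hy
  · obtain ⟨x, hxt, hxy⟩ := mem_iUnion₂.1 (hcover hy)
    rw [sum_apply]
    exact Finset.sum_pos' (fun z hz ↦ hgC z (htS z hz) y (hSC hy)) ⟨x, hxt, hxy⟩

namespace ConvexCone

variable {E : Type*} [NormedAddCommGroup E] [NormedSpace ℝ E]

theorem exists_mul_norm_le_of_salient [FiniteDimensional ℝ E] (K : ConvexCone ℝ E)
    (hK : IsClosed (K : Set E)) (hKs : K.Salient) :
    ∃ (f : StrongDual ℝ E) (c : ℝ), 0 < c ∧ ∀ u ∈ K, c * ‖u‖ ≤ f u := by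
  rcases (K : Set E).eq_empty_or_nonempty with hK0 | hne
  · exact ⟨0, 1, one_pos, fun u hu ↦ absurd (SetLike.mem_coe.2 hu) (hK0 ▸ notMem_empty u)⟩
  lift K to ProperCone ℝ E using ⟨hne, hK⟩
  have hcpt : IsCompact ((K : Set E) ∩ Metric.sphere 0 1) :=
    (isCompact_sphere 0 1).inter_left K.isClosed
  obtain ⟨f, hfK, hfS⟩ := K.exists_nonneg_dual_pos_on_compact hcpt inter_subset_left
    fun x hx ↦ hKs x hx.1 (ne_zero_of_mem_unit_sphere ⟨x, hx.2⟩)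
  exact ⟨f, exists_pos_mul_norm_le_of_homogeneous K.isClosed
    (fun r hr x hx ↦ K.smul_mem hx hr.le) f.continuous (fun r _ x ↦ by simp)
    fun x hx hx1 ↦ hfS x ⟨hx, mem_sphere_zero_iff_norm.2 hx1⟩⟩

theorem salient_of_isClosed_of_not_exists_line (K : ConvexCone ℝ E) (hK : IsClosed (K : Set E))
    (hline : ¬ ∃ p v : E, v ≠ 0 ∧ ∀ t : ℝ, p + t • v ∈ K) : K.Salient := by
  intro x hx hx0 hnx
  refine hline ⟨0, x, hx0, fun t ↦ ?_⟩
  rw [zero_add]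
  rcases lt_trichotomy t 0 with ht | rfl | ht
  · simpa using K.smul_mem (neg_pos.2 ht) hnx
  · simpa [Pointed] using Pointed.of_nonempty_of_isClosed ⟨x, hx⟩ hK
  · exact K.smul_mem ht hx

def mulNormLe (g : E →L[ℝ] ℝ) (d : ℝ) (hd : 0 ≤ d) : ConvexCone ℝ E where
  carrier := {x | d * ‖x‖ ≤ g x}
  smul_mem' r hr x (hx : d * ‖x‖ ≤ g x) := by
    change d * ‖r • x‖ ≤ g (r • x)
    rw [norm_smul, map_smul, smul_eq_mul, Real.norm_of_nonneg hr.le]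
    nlinarith
  add_mem' x (hx : d * ‖x‖ ≤ g x) y (hy : d * ‖y‖ ≤ g y) := by
    change d * ‖x + y‖ ≤ g (x + y)
    rw [map_add]
    nlinarith [norm_add_le x y]

theorem isClosed_mulNormLe (g : E →L[ℝ] ℝ) (d : ℝ) (hd : 0 ≤ d) :
    IsClosed (mulNormLe g d hd : Set E) :=
  isClosed_le (continuous_const.mul continuous_norm) g.continuous

theorem not_exists_line_mulNormLe (g : E →L[ℝ] ℝ) {d : ℝ} (hd : 0 < d) :
    ¬ ∃ p v : E, v ≠ 0 ∧ ∀ t : ℝ, p + t • v ∈ mulNormLe g d hd.le := by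
  rintro ⟨p, v, hv, hline⟩
  have hbound : ∀ t : ℝ, d * (|t| * ‖v‖) ≤ g p := fun t ↦ by
    have hplus : d * ‖p + t • v‖ ≤ g (p + t • v) := hline t
    have hminus : d * ‖p + (-t) • v‖ ≤ g (p + (-t) • v) := hline (-t)
    have htri : 2 * (|t| * ‖v‖) ≤ ‖p + t • v‖ + ‖p + (-t) • v‖ := by
      calc 2 * (|t| * ‖v‖) = ‖(p + t • v) - (p + (-t) • v)‖ := by
            rw [show (p + t • v) - (p + (-t) • v) = (2 * t) • v by module, norm_smul,
              Real.norm_eq_abs, abs_mul, abs_two, mul_assoc]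
        _ ≤ ‖p + t • v‖ + ‖p + (-t) • v‖ := norm_sub_le _ _
    simp only [map_add, map_smul, smul_eq_mul] at hplus hminus
    nlinarith
  have hdv : 0 < d * ‖v‖ := mul_pos hd (norm_pos_iff.2 hv)
  have hgp : 0 ≤ g p := by simpa using hbound 0
  have h := hbound (g p / (d * ‖v‖) + 1)
  rw [abs_of_pos (by positivity)] at h
  have hT : d * ((g p / (d * ‖v‖) + 1) * ‖v‖) = g p + d * ‖v‖ := by field_simp
  linarith

end ConvexCone

theorem exists_pos_mul_norm_le_norm_of_negDef_on_ker {E F : Type*} [NormedAddCommGroup E]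
    [NormedSpace ℝ E] [FiniteDimensional ℝ E] [NormedAddCommGroup F] [NormedSpace ℝ F]
    (Z : E →ₗ[ℝ] F) (Q : QuadraticForm ℝ E) (hQ : ∀ x : E, Z x = 0 → x ≠ 0 → Q x < 0) :
    ∃ ε : ℝ, 0 < ε ∧ ∀ x : E, 0 ≤ Q x → ε * ‖x‖ ≤ ‖Z x‖ :=
  exists_pos_mul_norm_le_of_homogeneous (s := {x | 0 ≤ Q x})
    (isClosed_le continuous_const Q.continuous_of_finiteDimensional)
    (fun r _ x hx ↦ by simpa [QuadraticMap.map_smul] using mul_nonneg (mul_self_nonneg r) hx)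
    (φ := fun x ↦ ‖Z x‖) (continuous_norm.comp Z.continuous_of_finiteDimensional)
    (fun r hr x ↦ by simp [norm_smul, abs_of_pos hr])
    fun x hx hx1 ↦ norm_pos_iff.2 fun hZx ↦
      (hQ x hZx (norm_ne_zero_iff.1 (hx1 ▸ one_ne_zero))).not_ge hx

/-- For a linear map `Z : E → F`, a quadratic form `Q` negative-definite on
`Ker Z`, and a strict convex cone `V ⊆ F`, the convex cone generated by
`{x | Z x ∈ V, Q x ≥ 0}` is strict (its closure contains no line). -/
theorem stmt7 {E F : Type*} [NormedAddCommGroup E] [NormedSpace ℝ E] [FiniteDimensional ℝ E]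
    [NormedAddCommGroup F] [NormedSpace ℝ F] [FiniteDimensional ℝ F]
    (Z : E →ₗ[ℝ] F) (Q : QuadraticForm ℝ E)
    (hQ : ∀ x : E, Z x = 0 → x ≠ 0 → Q x < 0)
    (V : Set F)
    (hVscale : ∀ r : ℝ, 0 < r → ∀ x ∈ V, r • x ∈ V)
    (hVadd : ∀ x ∈ V, ∀ y ∈ V, x + y ∈ V)
    (hVstrict : ¬ ∃ (p v : F), v ≠ 0 ∧ ∀ t : ℝ, p + t • v ∈ closure V) :
    ¬ ∃ (p v : E), v ≠ 0 ∧ ∀ t : ℝ,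
        p + t • v ∈ closure (coneHull {x : E | Z x ∈ V ∧ 0 ≤ Q x}) := by
  obtain ⟨ε, hε, hεZ⟩ := exists_pos_mul_norm_le_norm_of_negDef_on_ker Z Q hQ
  let W : ConvexCone ℝ F := (ConvexCone.mk V hVscale hVadd).closure
  obtain ⟨f, c, hc, hcf⟩ := W.exists_mul_norm_le_of_salient isClosed_closure
    (W.salient_of_isClosed_of_not_exists_line isClosed_closure hVstrict)
  let C := ConvexCone.mulNormLe (f.comp (LinearMap.toContinuousLinearMap Z)) (c * ε)
    (by positivity)
  have hSC : {x : E | Z x ∈ V ∧ 0 ≤ Q x} ⊆ C := fun x ⟨hZx, hQx⟩ ↦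
    calc c * ε * ‖x‖ = c * (ε * ‖x‖) := mul_assoc _ _ _
      _ ≤ c * ‖Z x‖ := mul_le_mul_of_nonneg_left (hεZ x hQx) hc.le
      _ ≤ f (Z x) := hcf (Z x) (subset_closure hZx)
  have hclosure : closure (coneHull {x : E | Z x ∈ V ∧ 0 ≤ Q x}) ⊆ C :=
    closure_minimal (coneHull_subset_s7 C hSC) (ConvexCone.isClosed_mulNormLe _ _ _)
  rintro ⟨p, v, hv, hline⟩
  exact ConvexCone.not_exists_line_mulNormLe _ (by positivity)
    ⟨p, v, hv, fun t ↦ hclosure (hline t)⟩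
end

section
/- Let Z : E → F be a linear map between finite-dimensional real normed vector spaces and S ⊆ E a subset. Then S satisfies the support property (i.e., there exist norms on E and F such that ‖Z(x)‖ ≥ ‖x‖ for all x ∈ S) if and only if there exists a quadratic form Q on E such that Q is negative definite on Ker Z and Q(x) ≥ 0 for all x ∈ S. -/
/-!
All norms on a finite-dimensional space are comparable, so a support property for arbitrary norms
gives `c ‖x‖ ≤ M ‖Z x‖` on `S` for Euclidean norms, and `Q x = M² ‖Z x‖² - c² ‖x‖²` works.
Conversely, `{Q ≥ 0}` is a closed cone meeting `Ker Z` only in `0`; by compactness of its trace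
on the unit sphere, `‖Z x‖ ≥ c ‖x‖` on it for some `c > 0`, so the norms `c ‖·‖` and `‖·‖` work.
-/

section FiniteDimensional

variable {V : Type*} [NormedAddCommGroup V] [NormedSpace ℝ V] [FiniteDimensional ℝ V]

theorem Seminorm.continuous_of_finiteDimensional (p : Seminorm ℝ V) : Continuous p :=
  continuousOn_univ.mp (p.convexOn.continuousOn isOpen_univ)

theorem QuadraticMap.continuous_of_finiteDimensional (Q : QuadraticForm ℝ V) : Continuous Q := by
  have hB : Continuous fun x => LinearMap.toContinuousLinearMap (associated Q x) :=
    (LinearMap.toContinuousLinearMap.toLinearMap ∘ₗ associated Q).continuous_of_finiteDimensional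
  convert hB.clm_apply continuous_id with x
  exact (associated_eq_self_apply ℝ Q x).symm

theorem exists_pos_mul_norm_le_on_cone {C : Set V} (hC : IsClosed C)
    (hCsmul : ∀ x ∈ C, ∀ t : ℝ, 0 < t → t • x ∈ C) {f : V → ℝ} (hf : Continuous f)
    (hfsmul : ∀ t : ℝ, 0 ≤ t → ∀ x, f (t • x) = t * f x) (hfpos : ∀ x ∈ C, x ≠ 0 → 0 < f x) :
    ∃ c, 0 < c ∧ ∀ x ∈ C, c * ‖x‖ ≤ f x := by
  obtain ⟨c, hc, hcK⟩ := ((isCompact_sphere (0 : V) 1).inter_right hC).exists_forall_le'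
    hf.continuousOn fun u hu => hfpos u hu.2 (ne_zero_of_mem_unit_sphere ⟨u, hu.1⟩)
  refine ⟨c, hc, fun x hx => ?_⟩
  rcases eq_or_ne x 0 with rfl | hx0
  · simpa using (hfsmul 0 le_rfl 0).ge
  have hnx : 0 < ‖x‖ := norm_pos_iff.mpr hx0
  have hu : ‖x‖⁻¹ • x ∈ Metric.sphere (0 : V) 1 ∩ C :=
    ⟨by simp [norm_smul, hnx.ne'], hCsmul x hx _ (inv_pos.mpr hnx)⟩
  calc c * ‖x‖ ≤ f (‖x‖⁻¹ • x) * ‖x‖ := by gcongr; exact hcK _ hu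
    _ = f x := by
      rw [hfsmul _ (inv_nonneg.mpr hnx.le), mul_comm, ← mul_assoc, mul_inv_cancel₀ hnx.ne',
        one_mul]

theorem Seminorm.exists_pos_mul_norm_le (p : Seminorm ℝ V) (hp : ∀ x, p x = 0 → x = 0) :
    ∃ c, 0 < c ∧ ∀ x, c * ‖x‖ ≤ p x := by
  obtain ⟨c, hc, hle⟩ := exists_pos_mul_norm_le_on_cone isClosed_univ (fun _ _ _ _ => trivial)
    p.continuous_of_finiteDimensional
    (fun t ht x => by rw [map_smul_eq_mul, Real.norm_of_nonneg ht])
    fun x _ hx => (apply_nonneg p x).lt_of_ne fun h => hx (hp x h.symm)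
  exact ⟨c, hc, fun x => hle x trivial⟩

end FiniteDimensional

noncomputable def normSqForm (V : Type*) [NormedAddCommGroup V] [InnerProductSpace ℝ V] :
    QuadraticForm ℝ V :=
  LinearMap.BilinMap.toQuadraticMap (innerₗ V)

@[simp]
theorem normSqForm_apply {V : Type*} [NormedAddCommGroup V] [InnerProductSpace ℝ V] (x : V) :
    normSqForm V x = ‖x‖ ^ 2 :=
  real_inner_self_eq_norm_sq x

section SupportProperty

variable {V W : Type*} [NormedAddCommGroup V] [NormedAddCommGroup W]

theorem exists_quadraticForm_of_seminorm_le [InnerProductSpace ℝ V] [InnerProductSpace ℝ W]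
    [FiniteDimensional ℝ V] [FiniteDimensional ℝ W] (T : V →ₗ[ℝ] W) {S : Set V}
    (p : Seminorm ℝ V) (q : Seminorm ℝ W) (hp : ∀ x, p x = 0 → x = 0)
    (hS : ∀ x ∈ S, p x ≤ q (T x)) :
    ∃ Q : QuadraticForm ℝ V, (∀ x, T x = 0 → x ≠ 0 → Q x < 0) ∧ ∀ x ∈ S, 0 ≤ Q x := by
  obtain ⟨c, hc, hcp⟩ := p.exists_pos_mul_norm_le hp
  obtain ⟨M, -, hqM⟩ := q.bound_of_continuous_normedSpace q.continuous_of_finiteDimensional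
  set Q := M ^ 2 • (normSqForm W).comp T - c ^ 2 • normSqForm V
  have hQ (x : V) : Q x = (M * ‖T x‖) ^ 2 - (c * ‖x‖) ^ 2 := by
    simp only [Q, sub_apply, smul_apply, QuadraticMap.comp_apply,
      normSqForm_apply, smul_eq_mul]
    ring
  refine ⟨Q, fun x hTx hx => ?_, fun x hx => ?_⟩
  · have : 0 < ‖x‖ := norm_pos_iff.mpr hx
    rw [hQ, hTx, norm_zero, mul_zero, zero_pow two_ne_zero, zero_sub, neg_neg_iff_pos]
    positivity
  · rw [hQ, sub_nonneg]
    exact pow_le_pow_left₀ (by positivity) ((hcp x).trans ((hS x hx).trans (hqM _))) 2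

theorem exists_seminorm_le_of_quadraticForm [NormedSpace ℝ V] [NormedSpace ℝ W]
    [FiniteDimensional ℝ V] (T : V →ₗ[ℝ] W) {S : Set V} (Q : QuadraticForm ℝ V)
    (hker : ∀ x, T x = 0 → x ≠ 0 → Q x < 0) (hS : ∀ x ∈ S, 0 ≤ Q x) :
    ∃ (p : Seminorm ℝ V) (q : Seminorm ℝ W), (∀ x, p x = 0 → x = 0) ∧
      (∀ y, q y = 0 → y = 0) ∧ ∀ x ∈ S, p x ≤ q (T x) := by
  obtain ⟨c, hc, hcT⟩ := exists_pos_mul_norm_le_on_cone (C := {x | 0 ≤ Q x})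
    (isClosed_le continuous_const Q.continuous_of_finiteDimensional)
    (fun x hx t _ => by simpa [QuadraticMap.map_smul] using mul_nonneg (mul_self_nonneg t) hx)
    (continuous_norm.comp T.continuous_of_finiteDimensional)
    (fun t ht x => by simp [norm_smul, Real.norm_of_nonneg ht])
    fun x hx hx0 => norm_pos_iff.mpr fun hTx => (hker x hTx hx0).not_ge hx
  refine ⟨c.toNNReal • normSeminorm ℝ V, normSeminorm ℝ W, fun x hx => ?_,
    fun y hy => norm_eq_zero.mp hy,
    fun x hx => by simpa [NNReal.smul_def, hc.le] using hcT x (hS x hx)⟩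
  simpa [hc.not_ge] using hx

end SupportProperty

/-- A subset `S ⊆ E` satisfies the support property with respect to a linear
map `Z : E → F` (there exist norms on `E` and `F` with `‖Z x‖ ≥ ‖x‖` on `S`) iff there is
a quadratic form `Q` on `E`, negative definite on `Ker Z`, with `Q ≥ 0` on `S`. -/
theorem stmt8 {E F : Type*} [AddCommGroup E] [Module ℝ E] [FiniteDimensional ℝ E]
    [AddCommGroup F] [Module ℝ F] [FiniteDimensional ℝ F]
    (Z : E →ₗ[ℝ] F) (S : Set E) :
    (∃ (nE : Seminorm ℝ E) (nF : Seminorm ℝ F),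
        (∀ x : E, nE x = 0 → x = 0) ∧ (∀ y : F, nF y = 0 → y = 0) ∧
        ∀ x ∈ S, nE x ≤ nF (Z x)) ↔
    ∃ Q : QuadraticForm ℝ E,
        (∀ x : E, Z x = 0 → x ≠ 0 → Q x < 0) ∧ ∀ x ∈ S, 0 ≤ Q x := by
  let e := LinearEquiv.ofFinrankEq E (EuclideanSpace ℝ (Fin (Module.finrank ℝ E)))
    finrank_euclideanSpace_fin.symm
  let f := LinearEquiv.ofFinrankEq F (EuclideanSpace ℝ (Fin (Module.finrank ℝ F)))
    finrank_euclideanSpace_fin.symm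
  let _ := NormedAddCommGroup.induced E _ e e.injective
  let _ := InnerProductSpace.induced e
  let _ := NormedAddCommGroup.induced F _ f f.injective
  let _ := InnerProductSpace.induced f
  exact ⟨fun ⟨p, q, hp, _, hS⟩ => exists_quadraticForm_of_seminorm_le Z p q hp hS,
    fun ⟨Q, hker, hS⟩ => exists_seminorm_le_of_quadraticForm Z Q hker hS⟩
end

section
/- On a smooth projective surface X, the discriminant quadratic form Δ(r, a₁, a₂) = a₁² − 2r·a₂ (where a₁ ranges over the real Néron–Severi space and a₁² denotes the intersection product) is negative-definite on the kernel of the linear map Z_{β,ω}(r, a₁, a₂) = (½ r(ω² − β²) + a₁·β − a₂) + i(a₁ − rβ)·ω, for any β, ω in the real Néron–Severi space with ω² > 0 and ω ample. Abstractly: let N be a finite-dimensional real vector space with a symmetric bilinear form of signature (1, ρ−1), ω ∈ N with ω² > 0, β ∈ N; on E = ℝ × N × ℝ define Δ(r,a₁,a₂) = a₁·a₁ − 2ra₂ and Z(r,a₁,a₂) = (½r(ω·ω − β·β) + a₁·β − a₂) + i(a₁ − rβ)·ω. Then Δ is negative-definite on Ker Z. -/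
/-- Let `N` carry a symmetric bilinear form which (as a piece of signature
`(1, ρ-1)`, where `ω·ω > 0`) is negative definite on `ω^⊥`. On `E = ℝ × N × ℝ`, the
discriminant `Δ(r, a₁, a₂) = a₁·a₁ − 2 r a₂` is negative definite on the kernel of the
central charge `Z(r, a₁, a₂) = (½ r (ω·ω − β·β) + a₁·β − a₂) + i (a₁·ω − r β·ω)`. -/
theorem stmt11 {N : Type*} [AddCommGroup N] [Module ℝ N] [FiniteDimensional ℝ N]
    (B : N →ₗ[ℝ] N →ₗ[ℝ] ℝ) (hsymm : ∀ a b : N, B a b = B b a)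
    (ω β : N) (hω : 0 < B ω ω)
    (hneg : ∀ D : N, B D ω = 0 → D ≠ 0 → B D D < 0) :
    ∀ v : ℝ × N × ℝ,
      ((((1 : ℝ) / 2) * v.1 * (B ω ω - B β β) + B v.2.1 β - v.2.2 : ℝ) : ℂ) +
          Complex.I * ((B v.2.1 ω - v.1 * B β ω : ℝ) : ℂ) = 0 →
        v ≠ 0 → B v.2.1 v.2.1 - 2 * v.1 * v.2.2 < 0 := by
  rintro ⟨r, a, a₂⟩ hZ hv
  rw [Complex.ext_iff] at hZ
  simp only [Complex.add_re, Complex.ofReal_re, Complex.mul_re, Complex.I_re,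
    Complex.ofReal_im, Complex.I_im, Complex.add_im, Complex.mul_im, Complex.zero_re,
    Complex.zero_im] at hZ
  obtain ⟨hre, him⟩ := hZ
  have hre' : (1:ℝ)/2 * r * (B ω ω - B β β) + B a β - a₂ = 0 := by linarith
  have him' : B a ω - r * B β ω = 0 := by linarith
  have hD : B (a - r • β) ω = 0 := by
    simp only [map_sub, map_smul, LinearMap.sub_apply, LinearMap.smul_apply, smul_eq_mul]
    linarith
  have expand : B (a - r • β) (a - r • β) = B a a - 2*r*B a β + r^2 * B β β := by
    simp only [map_sub, map_smul, LinearMap.sub_apply, LinearMap.smul_apply, smul_eq_mul]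
    rw [hsymm β a]; ring
  have key : B a a - 2 * r * a₂ = B (a - r • β) (a - r • β) - r^2 * B ω ω := by
    rw [expand]; linear_combination (2*r) * hre'
  show B a a - 2 * r * a₂ < 0
  rw [key]
  by_cases hr : r = 0
  · subst hr
    have ha : a ≠ 0 := by
      intro h0
      apply hv
      subst h0
      have ha2 : a₂ = 0 := by simpa using hre'
      simp [ha2, Prod.ext_iff]
    have hDa : B (a - (0:ℝ) • β) ω = 0 := hD
    have := hneg (a - (0:ℝ) • β) hD (by simpa using ha)
    nlinarith
  · have hDD : B (a - r • β) (a - r • β) ≤ 0 := by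
      by_cases h0 : a - r • β = 0
      · simp [h0]
      · exact (hneg _ hD h0).le
    nlinarith [hω, pow_pos (abs_pos.mpr hr) 2, sq_abs r]
end

section
/- Let N be a finite-dimensional real vector space with a symmetric bilinear form of signature (1, ρ−1), let ω ∈ N with ω·ω > 0, and suppose H, β ∈ N. Define for b = (b₀, b₁, b₂) ∈ ℝ × N × ℝ the quantity Δ^H(b) = (b₁·H)(b₁·ω) − b₀b₂(H·ω), and the map Z(b) = (½ b₀ (ω·ω) − b₂) + i (b₁·ω). Then Δ^H is negative semi-definite on Ker Z, provided H·ω ≥ 0. Consequently, for any ray ℓ ⊆ ℂ, the set Z^{-1}(ℓ) ∩ {Δ^H ≥ 0} is a convex cone. -/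
/-!
On `Ker Z` one has `b₁·ω = 0` and `b₂ = ½ b₀ (ω·ω)`, so `Δ^H(b) = -½ b₀² (ω·ω)(H·ω) ≤ 0`.
Convexity then holds for any quadratic form `Q` that is nonpositive on the kernel of a linear
map `Z`: if `Z v = s • Z u` with `s > 0`, then `v - s • u ∈ Ker Z`, and expanding
`Q (v - s • u) ≤ 0` gives `s · polar Q u v ≥ s² Q u + Q v ≥ 0`. Hence all three terms of
`Q (a • u + c • v) = a² Q u + a c polar Q u v + c² Q v` are nonnegative.
-/

/-- The quadratic form `Δ^H(b) = (b₁·H)(b₁·ω) − b₀ b₂ (H·ω)` on `ℝ × N × ℝ`. -/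
def DeltaH {N : Type*} [AddCommGroup N] [Module ℝ N]
    (B : N →ₗ[ℝ] N →ₗ[ℝ] ℝ) (ω H : N) (b : ℝ × N × ℝ) : ℝ :=
  B b.2.1 H * B b.2.1 ω - b.1 * b.2.2 * B H ω

/-- The central charge `Z(b) = (½ b₀ (ω·ω) − b₂) + i (b₁·ω)` on `ℝ × N × ℝ`. -/
noncomputable def Zcharge {N : Type*} [AddCommGroup N] [Module ℝ N]
    (B : N →ₗ[ℝ] N →ₗ[ℝ] ℝ) (ω : N) (b : ℝ × N × ℝ) : ℂ :=
  (((1 : ℝ) / 2 * b.1 * B ω ω - b.2.2 : ℝ) : ℂ) + Complex.I * ((B b.2.1 ω : ℝ) : ℂ)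

namespace QuadraticMap

variable {V W : Type*} [AddCommGroup V] [Module ℝ V] [AddCommGroup W] [Module ℝ W]
  (Q : QuadraticForm ℝ V) (Z : V →ₗ[ℝ] W)

theorem polar_nonneg_of_map_eq_smul (hker : ∀ k, Z k = 0 → Q k ≤ 0) {u v : V}
    (hu : 0 ≤ Q u) (hv : 0 ≤ Q v) {s : ℝ} (hs : 0 < s) (huv : Z v = s • Z u) :
    0 ≤ polar Q u v := by
  have hk : Q (v + (-s) • u) ≤ 0 := hker _ (by simp [huv])
  have hexpand : Q (v + (-s) • u) = Q v + s ^ 2 * Q u - s * polar Q u v := by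
    rw [QuadraticMap.map_add Q, polar_smul_right, polar_comm, QuadraticMap.map_smul]
    simp only [smul_eq_mul]
    ring
  nlinarith [sq_nonneg s, mul_nonneg (sq_nonneg s) hu]

theorem convex_setOf_map_mem_ray_and_nonneg (hker : ∀ k, Z k = 0 → Q k ≤ 0) (w : W) :
    Convex ℝ {b : V | (∃ r : ℝ, 0 < r ∧ Z b = r • w) ∧ 0 ≤ Q b} := by
  rintro u ⟨⟨r, hr, hZu⟩, hQu⟩ v ⟨⟨r', hr', hZv⟩, hQv⟩ a c ha hc hac
  have hpolar : 0 ≤ polar Q u v :=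
    polar_nonneg_of_map_eq_smul Q Z hker hQu hQv (div_pos hr' hr)
      (by rw [hZu, hZv, smul_smul, div_mul_cancel₀ _ hr.ne'])
  refine ⟨⟨a * r + c * r', ?_, ?_⟩, ?_⟩
  · rcases ha.lt_or_eq with ha | rfl
    · positivity
    · simp only [zero_add] at hac
      simpa [hac] using hr'
  · simp only [map_add, map_smul, hZu, hZv, smul_smul, add_smul]
  · rw [QuadraticMap.map_add Q, QuadraticMap.map_smul, QuadraticMap.map_smul, polar_smul_left,
      polar_smul_right]
    simp only [smul_eq_mul]
    positivity

theorem smul_mem_setOf_map_mem_ray_and_nonneg {w : W} {b : V}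
    (hb : b ∈ {b : V | (∃ r : ℝ, 0 < r ∧ Z b = r • w) ∧ 0 ≤ Q b}) {t : ℝ} (ht : 0 < t) :
    t • b ∈ {b : V | (∃ r : ℝ, 0 < r ∧ Z b = r • w) ∧ 0 ≤ Q b} := by
  obtain ⟨⟨r, hr, hZb⟩, hQb⟩ := hb
  refine ⟨⟨t * r, mul_pos ht hr, by rw [map_smul, hZb, smul_smul]⟩, ?_⟩
  rw [QuadraticMap.map_smul, smul_eq_mul]
  positivity

end QuadraticMap

section CentralCharge

variable {N : Type*} [AddCommGroup N] [Module ℝ N] (B : N →ₗ[ℝ] N →ₗ[ℝ] ℝ) (ω H : N)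

def deltaForm : QuadraticForm ℝ (ℝ × N × ℝ) :=
  let b₁ : ℝ × N × ℝ →ₗ[ℝ] N := LinearMap.fst ℝ N ℝ ∘ₗ LinearMap.snd ℝ ℝ (N × ℝ)
  QuadraticMap.linMulLin (B.flip H ∘ₗ b₁) (B.flip ω ∘ₗ b₁) -
    B H ω • QuadraticMap.linMulLin (LinearMap.fst ℝ ℝ (N × ℝ))
      (LinearMap.snd ℝ N ℝ ∘ₗ LinearMap.snd ℝ ℝ (N × ℝ))

theorem deltaForm_apply (b : ℝ × N × ℝ) : deltaForm B ω H b = DeltaH B ω H b := by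
  simp only [deltaForm, DeltaH, QuadraticMap.sub_apply, QuadraticMap.smul_apply,
    QuadraticMap.linMulLin_apply, LinearMap.comp_apply, LinearMap.fst_apply,
    LinearMap.snd_apply, LinearMap.flip_apply, smul_eq_mul]
  ring

noncomputable def centralCharge : ℝ × N × ℝ →ₗ[ℝ] ℂ where
  toFun := Zcharge B ω
  map_add' u v := by
    simp only [Zcharge, Prod.fst_add, Prod.snd_add, map_add, LinearMap.add_apply]
    push_cast
    ring
  map_smul' t u := by
    simp only [Zcharge, Prod.smul_fst, Prod.smul_snd, map_smul, LinearMap.smul_apply,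
      smul_eq_mul, RingHom.id_apply, Complex.real_smul]
    push_cast
    ring

theorem centralCharge_apply (b : ℝ × N × ℝ) : centralCharge B ω b = Zcharge B ω b := rfl

theorem DeltaH_nonpos_of_Zcharge_eq_zero (hω : 0 < B ω ω) (hHω : 0 ≤ B H ω)
    (b : ℝ × N × ℝ) (hb : Zcharge B ω b = 0) : DeltaH B ω H b ≤ 0 := by
  obtain ⟨hre, him⟩ := Complex.ext_iff.mp hb
  simp only [Zcharge, Complex.add_re, Complex.add_im, Complex.mul_re, Complex.mul_im,
    Complex.ofReal_re, Complex.ofReal_im, Complex.I_re, Complex.I_im, Complex.zero_re,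
    Complex.zero_im] at hre him
  have hb₁ : B b.2.1 ω = 0 := by linarith
  have hb₂ : b.2.2 = 1 / 2 * b.1 * B ω ω := by linarith
  have hΔ : DeltaH B ω H b = -(1 / 2 * b.1 ^ 2 * B ω ω * B H ω) := by
    rw [DeltaH, hb₁, hb₂]
    ring
  rw [hΔ, neg_nonpos]
  positivity

end CentralCharge

theorem stmt12_general {N : Type*} [AddCommGroup N] [Module ℝ N]
    (B : N →ₗ[ℝ] N →ₗ[ℝ] ℝ)
    (ω H : N) (hω : 0 < B ω ω) (hHω : 0 ≤ B H ω) :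
    (∀ b : ℝ × N × ℝ, Zcharge B ω b = 0 → DeltaH B ω H b ≤ 0) ∧
    ∀ z : ℂ, z ≠ 0 →
      Convex ℝ {b : ℝ × N × ℝ |
          (∃ r : ℝ, 0 < r ∧ Zcharge B ω b = (r : ℂ) * z) ∧ 0 ≤ DeltaH B ω H b} ∧
      ∀ r : ℝ, 0 < r → ∀ b ∈ {b : ℝ × N × ℝ |
          (∃ r' : ℝ, 0 < r' ∧ Zcharge B ω b = (r' : ℂ) * z) ∧ 0 ≤ DeltaH B ω H b},
        r • b ∈ {b : ℝ × N × ℝ |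
          (∃ r' : ℝ, 0 < r' ∧ Zcharge B ω b = (r' : ℂ) * z) ∧ 0 ≤ DeltaH B ω H b} := by
  have hker : ∀ b, centralCharge B ω b = 0 → deltaForm B ω H b ≤ 0 := fun b hb => by
    rw [deltaForm_apply]
    exact DeltaH_nonpos_of_Zcharge_eq_zero B ω H hω hHω b hb
  refine ⟨DeltaH_nonpos_of_Zcharge_eq_zero B ω H hω hHω, fun z _ => ?_⟩
  have hset : {b : ℝ × N × ℝ | (∃ r : ℝ, 0 < r ∧ Zcharge B ω b = (r : ℂ) * z) ∧
      0 ≤ DeltaH B ω H b} = {b | (∃ r : ℝ, 0 < r ∧ centralCharge B ω b = r • z) ∧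
      0 ≤ deltaForm B ω H b} := by
    simp only [centralCharge_apply, deltaForm_apply, Complex.real_smul]
  rw [hset]
  exact ⟨QuadraticMap.convex_setOf_map_mem_ray_and_nonneg _ _ hker z,
    fun t ht b hb => QuadraticMap.smul_mem_setOf_map_mem_ray_and_nonneg _ _ hb ht⟩

/-- With `ω·ω > 0`, `H·ω ≥ 0`, and the Hodge-index property
(`D·ω = 0 → D·D ≤ 0`), the form `Δ^H` is negative semi-definite on `Ker Z`; consequently,
for any ray `ℓ = ℝ_{>0} z ⊆ ℂ`, the set `Z⁻¹(ℓ) ∩ {Δ^H ≥ 0}` is a convex cone. -/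
theorem stmt12 {N : Type*} [AddCommGroup N] [Module ℝ N] [FiniteDimensional ℝ N]
    (B : N →ₗ[ℝ] N →ₗ[ℝ] ℝ) (hsymm : ∀ a b : N, B a b = B b a)
    (ω H : N) (hω : 0 < B ω ω) (hHω : 0 ≤ B H ω)
    (hneg : ∀ D : N, B D ω = 0 → B D D ≤ 0) :
    (∀ b : ℝ × N × ℝ, Zcharge B ω b = 0 → DeltaH B ω H b ≤ 0) ∧
    ∀ z : ℂ, z ≠ 0 →
      Convex ℝ {b : ℝ × N × ℝ |
          (∃ r : ℝ, 0 < r ∧ Zcharge B ω b = (r : ℂ) * z) ∧ 0 ≤ DeltaH B ω H b} ∧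
      ∀ r : ℝ, 0 < r → ∀ b ∈ {b : ℝ × N × ℝ |
          (∃ r' : ℝ, 0 < r' ∧ Zcharge B ω b = (r' : ℂ) * z) ∧ 0 ≤ DeltaH B ω H b},
        r • b ∈ {b : ℝ × N × ℝ |
          (∃ r' : ℝ, 0 < r' ∧ Zcharge B ω b = (r' : ℂ) * z) ∧ 0 ≤ DeltaH B ω H b} :=
  stmt12_general B ω H hω hHω
end

section
/- Let ω, H be elements of a finite-dimensional real vector space N with symmetric bilinear form of signature (1, ρ−1), with ω·ω > 0, H·ω = t ≥ 0, and H·H = s² ≥ 0 where s ≤ t (this holds when H is nef and ω is ample with ω² = 1). Then for any b₀ ≥ 0, b₁ ∈ N, b₂ ∈ ℝ satisfying the Bogomolov inequality b₁·b₁ − 2b₀b₂ ≥ 0, one has (b₁·H)(b₁·ω) − b₀b₂(H·ω) ≥ 0. -/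
/-- (Bogomolov-type inequality.) With `ω·ω = 1`, `H·ω = t ≥ 0`,
`H·H = s² ≥ 0`, `0 ≤ s ≤ t`, and the Hodge-index property
(`D·ω = 0, D ≠ 0 → D·D < 0`), any `b₀ ≥ 0`, `b₁ ∈ N`, `b₂ ∈ ℝ` satisfying the Bogomolov
inequality `b₁·b₁ − 2 b₀ b₂ ≥ 0` also satisfy `(b₁·H)(b₁·ω) − b₀ b₂ (H·ω) ≥ 0`. -/
theorem stmt13 {N : Type*} [AddCommGroup N] [Module ℝ N] [FiniteDimensional ℝ N]
    (B : N →ₗ[ℝ] N →ₗ[ℝ] ℝ) (hsymm : ∀ a b : N, B a b = B b a)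
    (ω H : N) (hω : B ω ω = 1)
    (hneg : ∀ D : N, B D ω = 0 → D ≠ 0 → B D D < 0)
    (s t : ℝ) (ht : B H ω = t) (ht0 : 0 ≤ t)
    (hs : B H H = s ^ 2) (hs0 : 0 ≤ s) (hst : s ≤ t)
    (b₀ : ℝ) (b₁ : N) (b₂ : ℝ) (hb₀ : 0 ≤ b₀)
    (hBog : 0 ≤ B b₁ b₁ - 2 * b₀ * b₂) :
    0 ≤ B b₁ H * B b₁ ω - b₀ * b₂ * B H ω := by
  have hneg' : ∀ D : N, B D ω = 0 → B D D ≤ 0 := by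
    intro D hD
    by_cases h : D = 0
    · simp [h]
    · exact le_of_lt (hneg D hD h)
  set p := B b₁ H with hp
  set q := B b₁ ω with hq
  -- key inequality : t * b₁·b₁ ≤ 2 p q
  have key : t * B b₁ b₁ ≤ 2 * p * q := by
    by_cases hcase : s = t
    · -- then H = s • ω
      have hD : H - s • ω = 0 := by
        by_contra hne
        have h1 : B (H - s • ω) ω = 0 := by
          simp [map_sub, map_smul, LinearMap.sub_apply, LinearMap.smul_apply,
            smul_eq_mul, ht, hω, hcase]
        have h2 := hneg (H - s • ω) h1 hne
        have h3 : B (H - s • ω) (H - s • ω) = 0 := by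
          simp only [map_sub, map_smul, LinearMap.sub_apply, LinearMap.smul_apply,
            smul_eq_mul, ht, hω, hs, hsymm ω H, ht]
          nlinarith [hcase]
        linarith [h2, h3.ge]
      have hHs : H = s • ω := by
        have := sub_eq_zero.mp hD
        exact this
      have hpq : p = s * q := by
        rw [hp, hHs, map_smul, smul_eq_mul, ← hq]
      -- b₁·b₁ ≤ q²
      have hb : B b₁ b₁ ≤ q ^ 2 := by
        have h1 : B (b₁ - q • ω) ω = 0 := by
          simp [map_sub, map_smul, LinearMap.sub_apply, LinearMap.smul_apply,
            smul_eq_mul, hω, ← hq]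
        have h2 := hneg' _ h1
        have h3 : B (b₁ - q • ω) (b₁ - q • ω) = B b₁ b₁ - q ^ 2 := by
          simp only [map_sub, map_smul, LinearMap.sub_apply, LinearMap.smul_apply,
            smul_eq_mul, hω, ← hq, hsymm ω b₁, ← hq]
          ring
        nlinarith
      have hq2 : 0 ≤ q ^ 2 := sq_nonneg q
      rw [hpq, ← hcase]
      nlinarith [mul_nonneg hs0 hq2, mul_nonneg hs0 (sub_nonneg.mpr hb)]
    · have hslt : s < t := lt_of_le_of_ne hst hcase
      have hd : t ^ 2 - s ^ 2 > 0 := by nlinarith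
      set x : ℝ := (q * t - p) / (t ^ 2 - s ^ 2) with hx
      set y : ℝ := q - x * t with hy
      set D : N := b₁ - x • H - y • ω with hDdef
      have hDω : B D ω = 0 := by
        simp only [hDdef, map_sub, map_smul, LinearMap.sub_apply, LinearMap.smul_apply,
          smul_eq_mul, ht, hω, ← hq, hy]
        ring
      have hDH : B D H = 0 := by
        simp only [hDdef, map_sub, map_smul, LinearMap.sub_apply, LinearMap.smul_apply,
          smul_eq_mul, hs, hsymm ω H, ht, ← hp, hy, hx]
        field_simp
        ring
      have hDD : B D D ≤ 0 := hneg' D hDω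
      -- relations
      have hprel : p = x * s ^ 2 + y * t := by
        have : B D H = p - x * s ^ 2 - y * t := by
          simp only [hDdef, map_sub, map_smul, LinearMap.sub_apply, LinearMap.smul_apply,
            smul_eq_mul, hs, hsymm ω H, ht, ← hp]
        rw [hDH] at this
        linarith
      have hqrel : q = x * t + y := by
        have : B D ω = q - x * t - y := by
          simp only [hDdef, map_sub, map_smul, LinearMap.sub_apply, LinearMap.smul_apply,
            smul_eq_mul, ht, hω, ← hq]
          ring
        rw [hDω] at this
        linarith
      -- expansion of B b₁ b₁
      have hb₁ : b₁ = D + x • H + y • ω := by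
        rw [hDdef]; abel
      have hexp : B b₁ b₁ = B D D + x * (x * s ^ 2 + y * t) + y * (x * t + y) := by
        conv_lhs => rw [hb₁]
        simp only [map_add, map_smul, LinearMap.add_apply, LinearMap.smul_apply,
          smul_eq_mul, hDH, hDω, hsymm H D, hsymm ω D, hsymm ω H, hs, hω, ht]
        ring
      rw [hexp, hprel, hqrel]
      nlinarith [mul_nonneg hs0 (sq_nonneg (s * x + y)),
        mul_nonneg (sub_nonneg.mpr hst) (add_nonneg (mul_nonneg (sq_nonneg s) (sq_nonneg x)) (sq_nonneg y)),
        mul_nonneg ht0 (neg_nonneg.mpr hDD)]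
  rw [ht]
  nlinarith [mul_nonneg ht0 hBog]
end

section
/- Let (Z, 𝒫) be a pre-stability condition on a triangulated category 𝒟 with respect to a class map cl : K(𝒟) → Γ, and let 0 < η < 1/2. Suppose E ≠ 0 in 𝒟 satisfies φ⁺(E) − φ⁻(E) ≤ η (the maximal and minimal phases of the HN factors of E differ by at most η). Then for any linear map u : Γ → ℂ, one has |u(cl E)| ≤ (‖u‖_σ / cos(πη)) · |Z(E)|, where ‖u‖_σ = sup{|u(cl F)| / |Z(F)| : F σ-semistable}. -/
/-!
Rotating by `e^{-iπφ₁}` puts the central charges `Z(Fᵢ)` of the HN factors into the sector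
`|arg| ≤ πη`, where each has real part at least `cos(πη) |Z(Fᵢ)|`; summing gives
`cos(πη) ∑ |Z(Fᵢ)| ≤ |Z(E)|`. On the other hand `|u(E)| ≤ ∑ |u(Fᵢ)| ≤ ‖u‖_σ ∑ |Z(Fᵢ)|`.
-/

open Complex

lemma Complex.re_exp_neg_mul_ofReal_mul_exp (α r θ : ℝ) :
    (exp (-(α : ℂ) * I) * (r * exp (θ * I))).re = r * Real.cos (θ - α) := by
  rw [mul_left_comm, ← Complex.exp_add,
    show -(α : ℂ) * I + θ * I = ((θ - α : ℝ) : ℂ) * I by push_cast; ring,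
    Complex.re_ofReal_mul, Complex.exp_ofReal_mul_I_re]

lemma Complex.cos_mul_norm_le_re_exp_neg_mul {α δ r θ : ℝ} (hr : 0 ≤ r) (hθ : |θ - α| ≤ δ)
    (hδ : δ ≤ Real.pi) :
    Real.cos δ * ‖(r : ℂ) * exp (θ * I)‖ ≤ (exp (-(α : ℂ) * I) * (r * exp (θ * I))).re := by
  rw [re_exp_neg_mul_ofReal_mul_exp, norm_mul, norm_exp_ofReal_mul_I, mul_one, norm_real,
    Real.norm_of_nonneg hr, mul_comm, ← Real.cos_abs (θ - α)]
  exact mul_le_mul_of_nonneg_left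
    (Real.cos_le_cos_of_nonneg_of_le_pi (abs_nonneg _) hδ hθ) hr

theorem Complex.cos_mul_sum_norm_le_norm_sum {ι : Type*} (s : Finset ι) (z : ι → ℂ)
    {α δ : ℝ} (hδ : δ ≤ Real.pi)
    (hz : ∀ i ∈ s, ∃ r θ : ℝ, 0 ≤ r ∧ |θ - α| ≤ δ ∧ z i = r * exp (θ * I)) :
    Real.cos δ * ∑ i ∈ s, ‖z i‖ ≤ ‖∑ i ∈ s, z i‖ := by
  calc Real.cos δ * ∑ i ∈ s, ‖z i‖
      ≤ ∑ i ∈ s, (exp (-(α : ℂ) * I) * z i).re := by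
        rw [Finset.mul_sum]
        refine Finset.sum_le_sum fun i hi => ?_
        obtain ⟨r, θ, hr, hθ, hzi⟩ := hz i hi
        rw [hzi]
        exact cos_mul_norm_le_re_exp_neg_mul hr hθ hδ
    _ = (exp (-(α : ℂ) * I) * ∑ i ∈ s, z i).re := by rw [Finset.mul_sum, re_sum]
    _ ≤ ‖exp (-(α : ℂ) * I) * ∑ i ∈ s, z i‖ := re_le_norm _
    _ = ‖∑ i ∈ s, z i‖ := by
        rw [norm_mul, show -(α : ℂ) * I = ((-α : ℝ) : ℂ) * I by push_cast; ring,
          norm_exp_ofReal_mul_I, one_mul]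

/-- Let `σ = (Z, 𝒫)` be a pre-stability condition (abstractly encoded: `O`
is the class of nonzero objects, `cl : O → Γ` the class map, `ss` the semistable objects
with phases `φ` satisfying `Z(cl F) ∈ ℝ_{>0} e^{iπ φ(F)}`). Suppose `0 < η < 1/2` and `E`
has an HN filtration with semistable factors `F 0, …, F (n-1)` of strictly decreasing
phases whose extreme phases differ by at most `η`. If `nσ` bounds `|u(cl F)| / |Z(cl F)|`
over all semistable `F` (e.g. `nσ = ‖u‖_σ`), then
`|u(cl E)| ≤ (nσ / cos(π η)) · |Z(cl E)|`. -/
theorem stmt14 {Γ : Type*} [AddCommGroup Γ] (Z u : Γ →+ ℂ)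
    {O : Type*} (cl : O → Γ) (ss : Set O) (φ : O → ℝ)
    (hZss : ∀ F ∈ ss, ∃ r : ℝ, 0 < r ∧
        Z (cl F) = (r : ℂ) * Complex.exp ((Real.pi * φ F : ℝ) * Complex.I))
    (η : ℝ) (hη : η < 1 / 2)
    (E : O) (n : ℕ) (hn : 0 < n) (F : Fin n → O)
    (hF : ∀ i, F i ∈ ss)
    (hdec : ∀ i j : Fin n, i < j → φ (F j) < φ (F i))
    (hcl : cl E = ∑ i, cl (F i))
    (hwidth : φ (F ⟨0, hn⟩) - φ (F ⟨n - 1, by omega⟩) ≤ η)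
    (nσ : ℝ)
    (hnσ : ∀ G ∈ ss, ‖u (cl G)‖ ≤ nσ * ‖Z (cl G)‖) :
    ‖u (cl E)‖ ≤ nσ / Real.cos (Real.pi * η) * ‖Z (cl E)‖ := by
  have hanti : Antitone (φ ∘ F) := StrictAnti.antitone fun i j h => hdec i j h
  have hphase : ∀ i, φ (F ⟨n - 1, by omega⟩) ≤ φ (F i) ∧ φ (F i) ≤ φ (F ⟨0, hn⟩) := fun i =>
    ⟨hanti (Fin.le_def.2 (Nat.le_sub_one_of_lt i.isLt)), hanti (Fin.le_def.2 (Nat.zero_le _))⟩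
  have hη0 : 0 ≤ η := by linarith [(hphase ⟨n - 1, by omega⟩).2]
  have hcos : 0 < Real.cos (Real.pi * η) :=
    Real.cos_pos_of_mem_Ioo ⟨by nlinarith [Real.pi_pos], by nlinarith [Real.pi_pos]⟩
  have hsector : Real.cos (Real.pi * η) * ∑ i, ‖Z (cl (F i))‖ ≤ ‖Z (cl E)‖ := by
    rw [hcl, map_sum]
    refine Complex.cos_mul_sum_norm_le_norm_sum _ _ (α := Real.pi * φ (F ⟨0, hn⟩))
      (by nlinarith [Real.pi_pos]) fun i _ => ?_
    obtain ⟨r, hr, hZ⟩ := hZss (F i) (hF i)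
    refine ⟨r, _, hr.le, ?_, hZ⟩
    rw [← mul_sub, abs_mul, abs_of_pos Real.pi_pos]
    refine mul_le_mul_of_nonneg_left (abs_le.2 ⟨?_, ?_⟩) Real.pi_pos.le <;> linarith [hphase i]
  have hnσ0 : 0 ≤ nσ := by
    obtain ⟨r, hr, hZ⟩ := hZss (F ⟨0, hn⟩) (hF _)
    refine nonneg_of_mul_nonneg_left ((norm_nonneg _).trans (hnσ (F ⟨0, hn⟩) (hF _))) ?_
    rwa [hZ, norm_mul, norm_exp_ofReal_mul_I, mul_one, norm_real, Real.norm_of_nonneg hr.le]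
  calc ‖u (cl E)‖ ≤ ∑ i, ‖u (cl (F i))‖ := by rw [hcl, map_sum]; exact norm_sum_le _ _
    _ ≤ nσ * ∑ i, ‖Z (cl (F i))‖ := by
        rw [Finset.mul_sum]; exact Finset.sum_le_sum fun i _ => hnσ _ (hF i)
    _ ≤ nσ * (‖Z (cl E)‖ / Real.cos (Real.pi * η)) :=
        mul_le_mul_of_nonneg_left ((le_div_iff₀ hcos).2 (by linarith)) hnσ0
    _ = nσ / Real.cos (Real.pi * η) * ‖Z (cl E)‖ := by ring
end

section
/- Let 𝒫 be a slicing of a triangulated category 𝒟 admitting a Serre functor 𝒮, and suppose there exists d ∈ ℝ such that 𝒮(𝒫_φ) = 𝒫_{φ+d} for all φ ∈ ℝ. Then the global dimension of 𝒫 equals d, i.e., sup{φ' − φ : Hom(𝒫_φ, 𝒫_{φ'}) ≠ 0} = d. -/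
open CategoryTheory

/-- Let `𝒫` be a slicing of a triangulated category `𝒟` with Serre functor
`𝒮` satisfying `𝒮(𝒫_φ) = 𝒫_{φ+d}` for all `φ`. Then the global dimension of `𝒫`,
`sup {φ' − φ : Hom(𝒫_φ, 𝒫_{φ'}) ≠ 0}`, equals `d`. (Serre duality is encoded by the
nonvanishing equivalence `Hom(X, Y) ≠ 0 ↔ Hom(Y, 𝒮X) ≠ 0`; the orthogonality axiom of
slicings and the nontriviality of some `𝒫_φ` are assumed.) -/
theorem stmt15 {C : Type*} [Category C] [Limits.HasZeroMorphisms C]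
    (S : Functor C C) (d : ℝ) (P : ℝ → Set C)
    (horth : ∀ φ φ' : ℝ, φ' < φ → ∀ X ∈ P φ, ∀ Y ∈ P φ', ∀ f : X ⟶ Y, f = 0)
    (hserre : ∀ X Y : C, (∃ f : X ⟶ Y, f ≠ 0) ↔ ∃ g : Y ⟶ S.obj X, g ≠ 0)
    (hshift : ∀ φ : ℝ, S.obj '' P φ = P (φ + d))
    (hnonzero : ∃ φ : ℝ, ∃ X ∈ P φ, 𝟙 X ≠ 0) :
    sSup {x : ℝ | ∃ φ φ' : ℝ, ∃ X ∈ P φ, ∃ Y ∈ P φ',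
        (∃ f : X ⟶ Y, f ≠ 0) ∧ x = φ' - φ} = d := by
  have hub : ∀ x ∈ {x : ℝ | ∃ φ φ' : ℝ, ∃ X ∈ P φ, ∃ Y ∈ P φ',
      (∃ f : X ⟶ Y, f ≠ 0) ∧ x = φ' - φ}, x ≤ d := by
    rintro x ⟨φ, φ', X, hX, Y, hY, hf, rfl⟩
    by_contra h
    push_neg at h
    obtain ⟨g, hg⟩ := (hserre X Y).mp hf
    have hSX : S.obj X ∈ P (φ + d) := by
      rw [← hshift φ]; exact ⟨X, hX, rfl⟩
    exact hg (horth φ' (φ + d) (by linarith) Y hY (S.obj X) hSX g)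
  have hmem : d ∈ {x : ℝ | ∃ φ φ' : ℝ, ∃ X ∈ P φ, ∃ Y ∈ P φ',
      (∃ f : X ⟶ Y, f ≠ 0) ∧ x = φ' - φ} := by
    obtain ⟨φ, X, hX, hId⟩ := hnonzero
    have hSX : S.obj X ∈ P (φ + d) := by
      rw [← hshift φ]; exact ⟨X, hX, rfl⟩
    obtain ⟨g, hg⟩ := (hserre X X).mp ⟨𝟙 X, hId⟩
    exact ⟨φ, φ + d, X, hX, S.obj X, hSX, ⟨g, hg⟩, by ring⟩
  exact le_antisymm (csSup_le ⟨d, hmem⟩ hub) (le_csSup ⟨d, hub⟩ hmem)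
end
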